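/- arXiv:2112.11795 — 10 statements merged into one kernel-verified Lean document; each statement's English description precedes it below -/
import Mathlib

section
/- Let X be a reflexive Banach space with strictly convex norm, and let (Y_i)_{i∈I} be a family of closed subspaces of X each of which is the range of a linear projection of norm at most 1. Then the intersection ⋂_{i∈I} Y_i is also the range of a linear projection of norm at most 1. -/
open NormedSpace Metric Filter Finset

section Aux

variable {X : Type*} [NormedAddCommGroup X] [NormedSpace ℝ X]

/-- Strict convexity lemma: if `P` is a norm-≤1 idempotent and `P w = y` with `‖w‖ ≤ ‖y‖`,
then `w = y`. -/
lemma eq_of_norm_le_of_proj [StrictConvexSpace ℝ X] (P : X →L[ℝ] X) (hP : ‖P‖ ≤ 1)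
    (hPP : ∀ z, P (P z) = P z) {y w : X} (hw : ‖w‖ ≤ ‖y‖) (hyw : P w = y) : w = y := by
  have hle : ∀ z : X, ‖P z‖ ≤ ‖z‖ := fun z =>
    (P.le_opNorm z).trans (by nlinarith [norm_nonneg z])
  have hPy : P y = y := by rw [← hyw, hPP, hyw]
  have h1 : ‖y‖ ≤ ‖w‖ := by rw [← hyw]; exact hle w
  have heq : ‖w‖ = ‖y‖ := le_antisymm hw h1
  have hyy : ‖y + y‖ = ‖y‖ + ‖y‖ := by
    rw [← two_smul ℝ y, norm_smul]
    simp [two_mul]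
  have hsum : P (w + y) = y + y := by rw [map_add, hyw, hPy]
  have h2 : ‖y‖ + ‖y‖ ≤ ‖w + y‖ := by rw [← hyy, ← hsum]; exact hle _
  have h3 : ‖w + y‖ = ‖w‖ + ‖y‖ :=
    le_antisymm (norm_add_le _ _) (by rw [heq]; exact h2)
  exact eq_of_norm_eq_of_norm_add_eq heq h3

lemma norm_foldr_le (l : List (X →L[ℝ] X)) (h : ∀ P ∈ l, ‖P‖ ≤ 1) (y : X) :
    ‖(l.foldr (· ∘L ·) (ContinuousLinearMap.id ℝ X)) y‖ ≤ ‖y‖ := by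
  induction l with
  | nil => simp
  | cons P l ih =>
    simp only [List.foldr_cons, ContinuousLinearMap.comp_apply]
    have hP : ‖P‖ ≤ 1 := h P (List.mem_cons_self)
    refine le_trans ((P.le_opNorm _).trans ?_) (ih fun Q hQ => h Q (List.mem_cons_of_mem _ hQ))
    exact mul_le_of_le_one_left (norm_nonneg _) hP

lemma fixed_of_foldr [StrictConvexSpace ℝ X] (l : List (X →L[ℝ] X))
    (h1 : ∀ P ∈ l, ‖P‖ ≤ 1) (h2 : ∀ P ∈ l, ∀ z, P (P z) = P z) (y : X)
    (hy : (l.foldr (· ∘L ·) (ContinuousLinearMap.id ℝ X)) y = y) :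
    ∀ P ∈ l, P y = y := by
  induction l with
  | nil => simp
  | cons P l ih =>
    simp only [List.foldr_cons, ContinuousLinearMap.comp_apply] at hy
    have hw : (l.foldr (· ∘L ·) (ContinuousLinearMap.id ℝ X)) y = y :=
      eq_of_norm_le_of_proj P (h1 P (List.mem_cons_self)) (h2 P (List.mem_cons_self))
        (norm_foldr_le l (fun Q hQ => h1 Q (List.mem_cons_of_mem _ hQ)) y) hy
    rw [hw] at hy
    intro Q hQ
    rcases List.mem_cons.mp hQ with rfl | hQ
    · exact hy
    · exact ih (fun Q hQ => h1 Q (List.mem_cons_of_mem _ hQ))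
        (fun Q hQ => h2 Q (List.mem_cons_of_mem _ hQ)) hw Q hQ

/-- In a reflexive space, closed balls are weakly compact. -/
lemma isCompact_weak_closedBall
    (hrefl : Function.Surjective (NormedSpace.inclusionInDoubleDual ℝ X)) (r : ℝ) :
    IsCompact ((toWeakSpace ℝ X) '' Metric.closedBall (0 : X) r) := by
  have hsurj : Function.Surjective (NormedSpace.inclusionInDoubleDualLi ℝ (E := X)) := hrefl
  let e : X ≃ₗᵢ[ℝ] StrongDual ℝ (StrongDual ℝ X) :=
    LinearIsometryEquiv.ofSurjective (NormedSpace.inclusionInDoubleDualLi ℝ (E := X)) hsurj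
  let φ : WeakDual ℝ (StrongDual ℝ X) → WeakSpace ℝ X :=
    fun ψ => toWeakSpace ℝ X (e.symm (WeakDual.toStrongDual ψ))
  have hφ : Continuous φ := by
    apply WeakBilin.continuous_of_continuous_eval
    intro f
    have hkey : (fun ψ : WeakDual ℝ (StrongDual ℝ X) =>
        (topDualPairing ℝ X).flip (e.symm (WeakDual.toStrongDual ψ)) f)
        = fun ψ : WeakDual ℝ (StrongDual ℝ X) => ψ f := by
      funext ψ
      have h3 : ∀ x : X, e x f = f x := fun x => rfl
      have h2 := congrArg (fun w : StrongDual ℝ (StrongDual ℝ X) => w f)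
        (e.apply_symm_apply (WeakDual.toStrongDual ψ))
      calc (topDualPairing ℝ X).flip (e.symm (WeakDual.toStrongDual ψ)) f
          = f (e.symm (WeakDual.toStrongDual ψ)) := rfl
        _ = e (e.symm (WeakDual.toStrongDual ψ)) f := (h3 _).symm
        _ = WeakDual.toStrongDual ψ f := h2
        _ = ψ f := rfl
    exact hkey ▸ WeakDual.eval_continuous f
  have hb : IsCompact (WeakDual.toStrongDual ⁻¹' Metric.closedBall 0 r) :=
    WeakDual.isCompact_closedBall (𝕜 := ℝ) (E := StrongDual ℝ X) 0 r
  have himg := hb.image hφ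
  have hset : φ '' (WeakDual.toStrongDual ⁻¹' Metric.closedBall 0 r)
      = (toWeakSpace ℝ X) '' Metric.closedBall (0 : X) r := by
    ext z
    constructor
    · rintro ⟨ψ, hψ, rfl⟩
      have hψ' : ‖WeakDual.toStrongDual ψ‖ ≤ r :=
        (mem_closedBall_zero_iff (E := StrongDual ℝ (StrongDual ℝ X))).mp (Set.mem_preimage.mp hψ)
      refine ⟨e.symm (WeakDual.toStrongDual ψ), mem_closedBall_zero_iff.mpr ?_, rfl⟩
      rw [e.symm.norm_map]
      exact hψ'
    · rintro ⟨x, hx, rfl⟩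
      have hx' : ‖x‖ ≤ r := mem_closedBall_zero_iff.mp hx
      refine ⟨WeakDual.toStrongDual.symm (e x),
        Set.mem_preimage.mpr ((mem_closedBall_zero_iff (E := StrongDual ℝ (StrongDual ℝ X))).mpr ?_), ?_⟩
      · rw [LinearEquiv.apply_symm_apply, e.norm_map]
        exact hx'
      · show toWeakSpace ℝ X (e.symm (WeakDual.toStrongDual (WeakDual.toStrongDual.symm (e x)))) = _
        rw [LinearEquiv.apply_symm_apply, e.symm_apply_apply]
  rwa [hset] at himg

end Aux

/-- In a reflexive Banach space with strictly convex norm, any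
intersection of a family of closed 1-complemented subspaces is 1-complemented. -/
theorem intersection_of_one_complemented
    {X : Type*} [NormedAddCommGroup X] [NormedSpace ℝ X] [CompleteSpace X]
    (hrefl : Function.Surjective (NormedSpace.inclusionInDoubleDual ℝ X))
    [StrictConvexSpace ℝ X]
    {ι : Type*} (Y : ι → Submodule ℝ X)
    (hclosed : ∀ i, IsClosed ((Y i) : Set X))
    (hcompl : ∀ i, ∃ P : X →L[ℝ] X, P.comp P = P ∧ ‖P‖ ≤ 1 ∧ LinearMap.range (P : X →ₗ[ℝ] X) = Y i) :
    ∃ P : X →L[ℝ] X, P.comp P = P ∧ ‖P‖ ≤ 1 ∧ LinearMap.range (P : X →ₗ[ℝ] X) = ⨅ i, Y i := by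
  classical
  haveI : ContinuousSMul ℝ (WeakSpace ℝ X) :=
    inferInstanceAs (ContinuousSMul ℝ (WeakBilin (topDualPairing ℝ X).flip))
  choose P hPidem hPnorm hPrange using hcompl
  have hPP : ∀ i z, P i (P i z) = P i z := fun i z => by
    have := congrArg (fun T : X →L[ℝ] X => T z) (hPidem i)
    simpa using this
  have hfix : ∀ i x, x ∈ Y i → P i x = x := by
    intro i x hx
    rw [← hPrange i] at hx
    obtain ⟨z, rfl⟩ := LinearMap.mem_range.mp hx
    exact hPP i z
  -- the weak topology
  haveI hT2 : T2Space (WeakSpace ℝ X) := by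
    have hinj : Function.Injective ((topDualPairing ℝ X).flip) := by
      intro a b hab
      refine (NormedSpace.eq_iff_forall_dual_eq ℝ).mpr fun g => ?_
      exact DFunLike.congr_fun hab g
    exact (WeakBilin.isEmbedding hinj).t2Space
  set u : X ≃ₗ[ℝ] WeakSpace ℝ X := toWeakSpace ℝ X with hu
  have hucont : Continuous (fun x : X => u x) := (toWeakSpaceCLM ℝ X).continuous
  set v : WeakSpace ℝ X → X := fun w => u.symm w with hv
  have huv : ∀ x : X, v (u x) = x := fun x => u.symm_apply_apply x
  have hvu : ∀ w : WeakSpace ℝ X, u (v w) = w := fun w => u.apply_symm_apply w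
  have hmap : ∀ (S : X →L[ℝ] X) (w : WeakSpace ℝ X), WeakSpace.map S w = u (S (v w)) := by
    intro S w
    rfl
  have hvadd : ∀ a b : WeakSpace ℝ X, v (a + b) = v a + v b := fun a b => map_add u.symm a b
  have hvsmul : ∀ (c : ℝ) (a : WeakSpace ℝ X), v (c • a) = c • v a := fun c a =>
    map_smul u.symm c a
  set K : X → Set (WeakSpace ℝ X) := fun x => (toWeakSpace ℝ X) '' Metric.closedBall 0 ‖x‖
    with hK
  have hKcompact : ∀ x, IsCompact (K x) := fun x => isCompact_weak_closedBall hrefl _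
  have hKmem : ∀ (x : X) (w : WeakSpace ℝ X), w ∈ K x ↔ ‖v w‖ ≤ ‖x‖ := by
    intro x w
    constructor
    · rintro ⟨z, hz, rfl⟩
      rw [mem_closedBall_zero_iff] at hz
      rwa [show v (toWeakSpace ℝ X z) = z from u.symm_apply_apply z]
    · intro h
      exact ⟨v w, mem_closedBall_zero_iff.mpr h, hvu w⟩
  -- the base set of candidate maps
  set base : Set (X → WeakSpace ℝ X) :=
    (⋂ (x : X) (y : X), {f | f (x + y) = f x + f y}) ∩
    ((⋂ (c : ℝ) (x : X), {f | f (c • x) = c • f x}) ∩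
    ((⋂ (x : X), {f | f x ∈ K x}) ∩
    (⋂ (x : X) (_ : x ∈ (⨅ i, Y i : Submodule ℝ X)), {f | f x = u x}))) with hbase
  have hbase_mem : ∀ f : X → WeakSpace ℝ X,
      f ∈ base ↔ (∀ x y, f (x + y) = f x + f y) ∧ (∀ (c : ℝ) x, f (c • x) = c • f x) ∧
        (∀ x, f x ∈ K x) ∧ (∀ x ∈ (⨅ i, Y i : Submodule ℝ X), f x = u x) := by
    intro f
    simp only [hbase, Set.mem_inter_iff, Set.mem_iInter, Set.mem_setOf_eq]
  have hbase_closed : IsClosed base := by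
    refine IsClosed.inter ?_ (IsClosed.inter ?_ (IsClosed.inter ?_ ?_))
    · exact isClosed_iInter fun x => isClosed_iInter fun y =>
        isClosed_eq (continuous_apply (x + y)) ((continuous_apply x).add (continuous_apply y))
    · exact isClosed_iInter fun c => isClosed_iInter fun x =>
        isClosed_eq (continuous_apply (c • x)) ((continuous_apply x).const_smul c)
    · exact isClosed_iInter fun x => (hKcompact x).isClosed.preimage (continuous_apply x)
    · exact isClosed_iInter fun x => isClosed_iInter fun _ =>
        isClosed_eq (continuous_apply x) continuous_const
  set D : Finset ι → Set (X → WeakSpace ℝ X) := fun s =>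
    base ∩ ⋂ (i : ι) (_ : i ∈ s) (x : X), {f | WeakSpace.map (P i) (f x) = f x} with hD
  have hD_mem : ∀ (s : Finset ι) (f : X → WeakSpace ℝ X),
      f ∈ D s ↔ f ∈ base ∧ ∀ i ∈ s, ∀ x, WeakSpace.map (P i) (f x) = f x := by
    intro s f
    simp only [hD, Set.mem_inter_iff, Set.mem_iInter, Set.mem_setOf_eq]
  have hDclosed : ∀ s, IsClosed (D s) := by
    intro s
    refine hbase_closed.inter ?_
    refine isClosed_iInter fun i => isClosed_iInter fun _ => isClosed_iInter fun x => ?_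
    exact isClosed_eq ((WeakSpace.map (P i)).continuous.comp (continuous_apply x))
      (continuous_apply x)
  have hDsub : ∀ s, D s ⊆ Set.univ.pi K := by
    intro s f hf
    intro x _
    exact ((hbase_mem f).mp ((hD_mem s f).mp hf).1).2.2.1 x
  have hDcompact : ∀ s, IsCompact (D s) := fun s =>
    (isCompact_univ_pi hKcompact).of_isClosed_subset (hDclosed s) (hDsub s)
  -- Nonemptiness of each D s via Cesàro means
  have hDne : ∀ s : Finset ι, (D s).Nonempty := by
    intro s
    set l : List (X →L[ℝ] X) := s.toList.map P with hl
    have hl1 : ∀ Q ∈ l, ‖Q‖ ≤ 1 := by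
      intro Q hQ
      obtain ⟨i, _, rfl⟩ := List.mem_map.mp hQ
      exact hPnorm i
    have hl2 : ∀ Q ∈ l, ∀ z, Q (Q z) = Q z := by
      intro Q hQ
      obtain ⟨i, _, rfl⟩ := List.mem_map.mp hQ
      exact hPP i
    set T : X →L[ℝ] X := l.foldr (· ∘L ·) (ContinuousLinearMap.id ℝ X) with hT
    have hTnorm : ∀ z, ‖T z‖ ≤ ‖z‖ := norm_foldr_le l hl1
    have hTfix : ∀ x ∈ (⨅ i, Y i : Submodule ℝ X), T x = x := by
      intro x hx
      rw [Submodule.mem_iInf] at hx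
      have haux : ∀ l' : List (X →L[ℝ] X), (∀ Q ∈ l', Q x = x) →
          (l'.foldr (· ∘L ·) (ContinuousLinearMap.id ℝ X)) x = x := by
        intro l' h
        induction l' with
        | nil => rfl
        | cons Q l' ih =>
          simp only [List.foldr_cons, ContinuousLinearMap.comp_apply]
          rw [ih fun R hR => h R (List.mem_cons_of_mem _ hR), h Q (List.mem_cons_self)]
      apply haux
      intro Q hQ
      obtain ⟨i, _, rfl⟩ := List.mem_map.mp hQ
      exact hfix i x (hx i)
    have hTpow_norm : ∀ (n : ℕ) (z : X), ‖(T ^ n) z‖ ≤ ‖z‖ := by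
      intro n
      induction n with
      | zero => intro z; simp
      | succ n ih =>
        intro z
        rw [pow_succ, ContinuousLinearMap.mul_apply]
        exact (ih (T z)).trans (hTnorm z)
    have hTpow_fix : ∀ (n : ℕ), ∀ x ∈ (⨅ i, Y i : Submodule ℝ X), (T ^ n) x = x := by
      intro n
      induction n with
      | zero => intro x _; simp
      | succ n ih =>
        intro x hx
        rw [pow_succ, ContinuousLinearMap.mul_apply, hTfix x hx, ih x hx]
    set A : ℕ → X →L[ℝ] X :=
      fun n => ((n : ℝ) + 1)⁻¹ • (∑ k ∈ Finset.range (n + 1), T ^ k) with hA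
    have hApos : ∀ n : ℕ, (0 : ℝ) < (n : ℝ) + 1 := fun n => by positivity
    have hAapply : ∀ (n : ℕ) (x : X),
        A n x = ((n : ℝ) + 1)⁻¹ • ∑ k ∈ Finset.range (n + 1), (T ^ k) x := by
      intro n x
      simp [hA, ContinuousLinearMap.sum_apply]
    have hAnorm : ∀ (n : ℕ) (x : X), ‖A n x‖ ≤ ‖x‖ := by
      intro n x
      rw [hAapply, norm_smul]
      have h1 : ‖∑ k ∈ Finset.range (n + 1), (T ^ k) x‖ ≤ ((n : ℝ) + 1) * ‖x‖ := by
        refine (norm_sum_le _ _).trans ?_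
        have := Finset.sum_le_sum (f := fun k => ‖(T ^ k) x‖) (g := fun _ => ‖x‖)
          (s := Finset.range (n + 1)) (fun k _ => hTpow_norm k x)
        simpa using this
      have h2 : ‖((n : ℝ) + 1)⁻¹‖ = ((n : ℝ) + 1)⁻¹ := by
        rw [Real.norm_eq_abs, abs_of_pos (by positivity)]
      rw [h2]
      calc ((n : ℝ) + 1)⁻¹ * ‖∑ k ∈ Finset.range (n + 1), (T ^ k) x‖
          ≤ ((n : ℝ) + 1)⁻¹ * (((n : ℝ) + 1) * ‖x‖) := by
            exact mul_le_mul_of_nonneg_left h1 (by positivity)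
        _ = ‖x‖ := by
            rw [← mul_assoc, inv_mul_cancel₀ (hApos n).ne', one_mul]
    have hAfix : ∀ (n : ℕ), ∀ x ∈ (⨅ i, Y i : Submodule ℝ X), A n x = x := by
      intro n x hx
      rw [hAapply]
      have : ∀ k ∈ Finset.range (n + 1), (T ^ k) x = x := fun k _ => hTpow_fix k x hx
      rw [Finset.sum_congr rfl this, Finset.sum_const, Finset.card_range,
        ← Nat.cast_smul_eq_nsmul ℝ, smul_smul]
      rw [show ((n + 1 : ℕ) : ℝ) = (n : ℝ) + 1 by push_cast; ring]
      rw [inv_mul_cancel₀ (hApos n).ne', one_smul]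
    set g : ℕ → X → WeakSpace ℝ X := fun n x => u (A n x) with hg
    have hgbase : ∀ n, g n ∈ base := by
      intro n
      rw [hbase_mem]
      refine ⟨fun x y => ?_, fun c x => ?_, fun x => ?_, fun x hx => ?_⟩
      · simp only [hg, map_add]
      · simp only [hg, map_smul]
      · rw [hKmem]
        rw [show v (u (A n x)) = A n x from huv _]
        exact hAnorm n x
      · simp only [hg, hAfix n x hx]
    have hFle : Filter.map g Filter.atTop ≤ Filter.principal (Set.univ.pi K) := by
      rw [Filter.le_principal_iff, Filter.mem_map]
      filter_upwards with n
      intro x _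
      exact ((hbase_mem (g n)).mp (hgbase n)).2.2.1 x
    obtain ⟨f, hfK, hcl⟩ := (isCompact_univ_pi hKcompact).exists_clusterPt hFle
    have hfbase : f ∈ base := by
      rw [← hbase_closed.closure_eq]
      rw [mem_closure_iff_clusterPt]
      refine hcl.mono ?_
      rw [Filter.le_principal_iff, Filter.mem_map]
      filter_upwards with n
      exact hgbase n
    -- T-invariance of the cluster point
    have hTf : ∀ x, WeakSpace.map T (f x) = f x := by
      intro x
      set dfn : (X → WeakSpace ℝ X) → WeakSpace ℝ X :=
        fun h => WeakSpace.map T (h x) - h x with hdfn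
      have hdc : Continuous dfn :=
        ((WeakSpace.map T).continuous.comp (continuous_apply x)).sub (continuous_apply x)
      have hkey : ∀ n, T (A n x) - A n x = ((n : ℝ) + 1)⁻¹ • ((T ^ (n + 1)) x - x) := by
        intro n
        rw [hAapply, map_smul, ← smul_sub]
        congr 1
        rw [map_sum, ← Finset.sum_sub_distrib]
        have hpow : ∀ k, T ((T ^ k) x) - (T ^ k) x = (T ^ (k + 1)) x - (T ^ k) x := by
          intro k
          rw [pow_succ', ContinuousLinearMap.mul_apply]
        rw [Finset.sum_congr rfl fun k _ => hpow k]
        rw [Finset.sum_range_sub (fun k => (T ^ k) x) (n + 1)]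
        simp
      have hbnd : ∀ n : ℕ, ‖T (A n x) - A n x‖ ≤ ((n : ℝ) + 1)⁻¹ * (2 * ‖x‖) := by
        intro n
        rw [hkey, norm_smul, Real.norm_eq_abs, abs_of_pos (by positivity)]
        refine mul_le_mul_of_nonneg_left ?_ (by positivity)
        refine (norm_sub_le _ _).trans ?_
        have := hTpow_norm (n + 1) x
        linarith
      have hgt : Filter.Tendsto (fun n : ℕ => ((n : ℝ) + 1)⁻¹ * (2 * ‖x‖))
          Filter.atTop (nhds 0) := by
        have h0 : Filter.Tendsto (fun n : ℕ => ((n : ℝ) + 1)⁻¹) Filter.atTop (nhds 0) :=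
          tendsto_one_div_add_atTop_nhds_zero_nat.congr fun n => one_div _
        simpa using h0.mul_const (2 * ‖x‖)
      have hXtend : Filter.Tendsto (fun n => T (A n x) - A n x) Filter.atTop (nhds 0) :=
        squeeze_zero_norm hbnd hgt
      have htend : Filter.Tendsto (dfn ∘ g) Filter.atTop (nhds 0) := by
        have hcomp : ∀ n, (dfn ∘ g) n = u (T (A n x) - A n x) := by
          intro n
          simp only [Function.comp_apply, hdfn, hg]
          rw [hmap T (u (A n x)), huv]
          rw [show (u (T (A n x)) - u (A n x) : WeakSpace ℝ X) = u (T (A n x) - A n x) from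
            (map_sub u _ _).symm]
        rw [show (dfn ∘ g) = fun n => u (T (A n x) - A n x) from funext hcomp]
        have := (hucont.tendsto 0).comp hXtend
        simpa [Function.comp_def] using this
      have hclmap : ClusterPt (dfn f) (Filter.map (dfn ∘ g) Filter.atTop) := by
        have := hcl.map hdc.continuousAt (Filter.tendsto_map (f := dfn))
        rwa [Filter.map_map] at this
      have hne : (nhds (dfn f) ⊓ nhds 0).NeBot :=
        hclmap.mono htend
      have h0 : dfn f = 0 := eq_of_nhds_neBot hne
      have := sub_eq_zero.mp h0
      exact this
    refine ⟨f, (hD_mem s f).mpr ⟨hfbase, ?_⟩⟩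
    intro i hi x
    have hTfx : T (v (f x)) = v (f x) := by
      have := congrArg v (hTf x)
      rwa [hmap T (f x), huv] at this
    have hPifx : P i (v (f x)) = v (f x) := by
      refine fixed_of_foldr l hl1 hl2 (v (f x)) hTfx (P i) ?_
      exact List.mem_map.mpr ⟨i, Finset.mem_toList.mpr hi, rfl⟩
    rw [hmap (P i) (f x), hPifx, hvu]
  -- Put everything together via compactness
  haveI : Nonempty (Finset ι) := ⟨∅⟩
  have hdir : Directed (· ⊇ ·) D := by
    intro s t
    refine ⟨s ∪ t, ?_, ?_⟩
    · intro f hf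
      rw [hD_mem] at hf ⊢
      exact ⟨hf.1, fun i hi x => hf.2 i (Finset.mem_union_left _ hi) x⟩
    · intro f hf
      rw [hD_mem] at hf ⊢
      exact ⟨hf.1, fun i hi x => hf.2 i (Finset.mem_union_right _ hi) x⟩
  obtain ⟨f, hf⟩ := IsCompact.nonempty_iInter_of_directed_nonempty_isCompact_isClosed
    D hdir hDne hDcompact hDclosed
  rw [Set.mem_iInter] at hf
  have hfbase := ((hD_mem ∅ f).mp (hf ∅)).1
  rw [hbase_mem] at hfbase
  obtain ⟨hfadd, hfsmul, hfball, hffix⟩ := hfbase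
  have hfP : ∀ (i : ι) (x : X), P i (v (f x)) = v (f x) := by
    intro i x
    have := ((hD_mem {i} f).mp (hf {i})).2 i (Finset.mem_singleton_self i) x
    have h2 := congrArg v this
    rwa [hmap (P i) (f x), huv] at h2
  set Qlin : X →ₗ[ℝ] X :=
    { toFun := fun x => v (f x)
      map_add' := fun x y => by
        show v (f (x + y)) = v (f x) + v (f y)
        rw [hfadd, hvadd]
      map_smul' := fun c x => by
        show v (f (c • x)) = c • v (f x)
        rw [hfsmul, hvsmul] } with hQlin
  have hQb : ∀ x, ‖Qlin x‖ ≤ 1 * ‖x‖ := by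
    intro x
    rw [one_mul]
    exact (hKmem x (f x)).mp (hfball x)
  set Q : X →L[ℝ] X := Qlin.mkContinuous 1 hQb with hQ
  have hQapply : ∀ x, Q x = v (f x) := fun x => rfl
  have hQmem : ∀ x, Q x ∈ (⨅ i, Y i : Submodule ℝ X) := by
    intro x
    rw [Submodule.mem_iInf]
    intro i
    rw [← hPrange i]
    exact ⟨Q x, by rw [hQapply]; exact hfP i x⟩
  have hQfix : ∀ x ∈ (⨅ i, Y i : Submodule ℝ X), Q x = x := by
    intro x hx
    rw [hQapply, hffix x hx, huv]
  refine ⟨Q, ?_, ?_, ?_⟩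
  · ext z
    exact hQfix (Q z) (hQmem z)
  · exact Qlin.mkContinuous_norm_le zero_le_one hQb
  · refine le_antisymm ?_ ?_
    · rintro x ⟨z, rfl⟩
      exact hQmem z
    · intro x hx
      exact ⟨x, hQfix x hx⟩
end

section
/- Let X be a Banach space with strictly convex norm, let S be a semigroup of linear contractions on X, and let Y be a subspace of X. If T ∈ conv(S) (a finite convex combination T = ∑_k λ_k s_k with s_k ∈ S, λ_k ≥ 0, ∑ λ_k = 1) acts as the identity on Y, then each s_k acts as the identity on Y. Consequently conv(Stab_S(Y)) = Stab_{conv(S)}(Y). -/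
/-- In a strictly convex normed space, if a finite convex combination of
contractions from a semigroup `S` acts as the identity on a subspace `Y`, then each
member of the combination (with nonzero coefficient) acts as the identity on `Y`.
Consequently `conv(Stab_S(Y)) = Stab_{conv(S)}(Y)`. -/
theorem convexHull_stabilizer
    {X : Type*} [NormedAddCommGroup X] [NormedSpace ℝ X] [StrictConvexSpace ℝ X]
    (S : Set (X →L[ℝ] X))
    (hS1 : ∀ s ∈ S, ‖s‖ ≤ 1)
    (hS2 : ∀ s ∈ S, ∀ t ∈ S, s.comp t ∈ S)
    (Y : Submodule ℝ X) :
    (∀ (ι : Type) (K : Finset ι) (l : ι → ℝ) (s : ι → X →L[ℝ] X),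
        (∀ k ∈ K, 0 ≤ l k) → (∑ k ∈ K, l k) = 1 → (∀ k ∈ K, s k ∈ S) →
        (∀ y ∈ Y, (∑ k ∈ K, l k • s k) y = y) →
        ∀ k ∈ K, l k ≠ 0 → ∀ y ∈ Y, s k y = y) ∧
    convexHull ℝ {s ∈ S | ∀ y ∈ Y, s y = y}
      = {T ∈ convexHull ℝ S | ∀ y ∈ Y, T y = y} := by
  have main : ∀ (ι : Type) (K : Finset ι) (l : ι → ℝ) (s : ι → X →L[ℝ] X),
      (∀ k ∈ K, 0 ≤ l k) → (∑ k ∈ K, l k) = 1 → (∀ k ∈ K, s k ∈ S) →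
      (∀ y ∈ Y, (∑ k ∈ K, l k • s k) y = y) →
      ∀ k ∈ K, l k ≠ 0 → ∀ y ∈ Y, s k y = y := by
    intro ι K l s hl hsum hs hfix k hk hlk y hy
    classical
    have heq : ∑ j ∈ K, l j • s j y = y := by
      have := hfix y hy
      simpa [ContinuousLinearMap.sum_apply] using this
    have hnorm : ∀ j ∈ K, ‖s j y‖ ≤ ‖y‖ := fun j hj => by
      simpa using (s j).le_of_opNorm_le (hS1 _ (hs j hj)) y
    have hsplit : l k • s k y + ∑ j ∈ K.erase k, l j • s j y = y := by
      rw [Finset.add_sum_erase K (fun j => l j • s j y) hk]; exact heq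
    have hlk1 : l k ≤ 1 := hsum ▸ Finset.single_le_sum hl hk
    rcases eq_or_lt_of_le hlk1 with h1 | h1
    · -- l k = 1, all other weights zero
      have hz : ∑ j ∈ K.erase k, l j = 0 := by
        have := Finset.add_sum_erase K l hk
        rw [hsum, ← h1] at this; linarith
      have hzero : ∀ j ∈ K.erase k, l j = 0 := by
        intro j hj
        exact (Finset.sum_eq_zero_iff_of_nonneg
          (fun j hj => hl j (Finset.mem_of_mem_erase hj))).1 hz j hj
      rw [Finset.sum_eq_zero (fun j hj => by rw [hzero j hj, zero_smul]),
        add_zero, h1, one_smul] at hsplit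
      exact hsplit
    · -- 0 < l k < 1
      have hlk0 : 0 < l k := lt_of_le_of_ne (hl k hk) (Ne.symm hlk)
      have h1k : 0 < 1 - l k := by linarith
      set w := ∑ j ∈ K.erase k, l j • s j y with hw
      have hysum : y = l k • s k y + w := hsplit.symm
      have hsumrest : ∑ j ∈ K.erase k, l j = 1 - l k := by
        have := Finset.add_sum_erase K l hk
        rw [hsum] at this; linarith
      have hwnorm : ‖w‖ ≤ (1 - l k) * ‖y‖ := by
        calc ‖w‖ ≤ ∑ j ∈ K.erase k, ‖l j • s j y‖ := norm_sum_le _ _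
          _ ≤ ∑ j ∈ K.erase k, l j * ‖y‖ := by
              refine Finset.sum_le_sum fun j hj => ?_
              rw [norm_smul, Real.norm_eq_abs,
                abs_of_nonneg (hl j (Finset.mem_of_mem_erase hj))]
              exact mul_le_mul_of_nonneg_left
                (hnorm j (Finset.mem_of_mem_erase hj)) (hl j (Finset.mem_of_mem_erase hj))
          _ = (1 - l k) * ‖y‖ := by rw [← Finset.sum_mul, hsumrest]
      set z := (1 - l k)⁻¹ • w with hzdef
      have hznorm : ‖z‖ ≤ ‖y‖ := by
        rw [hzdef, norm_smul, Real.norm_eq_abs, abs_of_pos (inv_pos.2 h1k)]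
        rw [inv_mul_le_iff₀ h1k]
        linarith [hwnorm]
      have hycombo : y = l k • s k y + (1 - l k) • z := by
        rw [hzdef, smul_smul, mul_inv_cancel₀ (ne_of_gt h1k), one_smul]
        exact hysum
      by_contra hne
      have hne' : s k y ≠ z := by
        intro h
        have hyz : y = z := by
          rw [hycombo, h, ← add_smul]; simp
        exact hne (h.trans hyz.symm)
      have := norm_combo_lt_of_ne (hnorm k hk) hznorm hne' hlk0 h1k (by ring)
      rw [← hycombo] at this
      exact lt_irrefl _ this
  refine ⟨main, ?_⟩
  apply Set.Subset.antisymm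
  · apply convexHull_min
    · intro t ht
      exact ⟨subset_convexHull ℝ S ht.1, ht.2⟩
    · rintro T ⟨hT1, hT2⟩ U ⟨hU1, hU2⟩ a b ha hb hab
      refine ⟨(convex_convexHull ℝ S) hT1 hU1 ha hb hab, fun y hy => ?_⟩
      simp only [ContinuousLinearMap.add_apply, ContinuousLinearMap.coe_smul',
        Pi.smul_apply, hT2 y hy, hU2 y hy, ← add_smul, hab, one_smul]
  · rintro T ⟨hT1, hT2⟩
    rw [convexHull_eq] at hT1
    obtain ⟨ι, t, w, z, hw0, hw1, hz, hcm⟩ := hT1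
    rw [Finset.centerMass_eq_of_sum_1 _ _ hw1] at hcm
    have hfix : ∀ y ∈ Y, (∑ i ∈ t, w i • z i) y = y := by
      intro y hy; rw [hcm]; exact hT2 y hy
    have hstab := main ι t w z hw0 hw1 hz hfix
    set t' := t.filter (fun i => w i ≠ 0) with ht'
    have hw1' : ∑ i ∈ t', w i = 1 := by
      rw [ht', Finset.sum_filter_ne_zero]; exact hw1
    have hT : T = ∑ i ∈ t', w i • z i := by
      rw [← hcm, ht']
      exact (Finset.sum_filter_of_ne (fun i _ h => by
        intro h0; rw [h0, zero_smul] at h; exact h rfl)).symm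
    rw [hT]
    exact Convex.sum_mem (convex_convexHull ℝ _)
      (fun i hi => hw0 i (Finset.mem_of_mem_filter _ hi)) hw1'
      (fun i hi => subset_convexHull ℝ _
        ⟨hz i (Finset.mem_of_mem_filter _ hi),
         hstab i (Finset.mem_of_mem_filter _ hi) (Finset.mem_filter.1 hi).2⟩)
end

section
/- Let X be a Banach space with locally uniformly rotund norm, S a semigroup of linear contractions on X, Y a subspace of X, and p a contractive linear projection lying in the WOT-closure of conv(S) such that p restricted to Y is the identity. Then the Korovkin envelope Env_S(Y) is contained in the range of p. -/
open Filter

/-- A norm is locally uniformly rotund (LUR). -/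
def IsLUR (X : Type*) [NormedAddCommGroup X] [NormedSpace ℝ X] : Prop :=
  ∀ x₀ : X, ‖x₀‖ = 1 → ∀ ε > (0:ℝ), ∃ δ > (0:ℝ), ∀ x : X, ‖x‖ ≤ 1 →
    1 - δ < ‖(1/2 : ℝ) • (x + x₀)‖ → ‖x - x₀‖ < ε

lemma sum_biUnion_le_aux {ι κ : Type*} [DecidableEq κ] (w : κ → ℝ) (hw : ∀ j, 0 ≤ w j)
    (s : Finset ι) (f : ι → Finset κ) :
    ∑ j ∈ s.biUnion f, w j ≤ ∑ i ∈ s, ∑ j ∈ f i, w j := by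
  classical
  induction s using Finset.induction_on with
  | empty => simp
  | insert a s ha ih =>
    rw [Finset.biUnion_insert, Finset.sum_insert ha]
    have h1 : ∑ j ∈ f a ∪ s.biUnion f, w j ≤ (∑ j ∈ f a, w j) + ∑ j ∈ s.biUnion f, w j := by
      have h2 := Finset.sum_union_inter (s₁ := f a) (s₂ := s.biUnion f) (f := w)
      have h3 : 0 ≤ ∑ j ∈ f a ∩ s.biUnion f, w j := Finset.sum_nonneg fun j _ => hw j
      linarith
    exact h1.trans (by linarith)

lemma lur_key {X : Type*} [NormedAddCommGroup X] [NormedSpace ℝ X] (hLUR : IsLUR X)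
    (y : X) (hy : y ≠ 0) {ε : ℝ} (hε : 0 < ε) :
    ∃ δ > (0:ℝ), ∃ ψ : X →L[ℝ] ℝ, ‖ψ‖ = 1 ∧ ψ y = ‖y‖ ∧
      ∀ z : X, ‖z‖ ≤ ‖y‖ → ‖y‖ - δ < ψ z → ‖z - y‖ < ε := by
  have hny : (0:ℝ) < ‖y‖ := norm_pos_iff.mpr hy
  obtain ⟨δ₀, hδ₀, h⟩ := hLUR (‖y‖⁻¹ • y)
    (by rw [norm_smul, Real.norm_eq_abs, abs_of_pos (by positivity), inv_mul_cancel₀ hny.ne'])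
    (ε / ‖y‖) (div_pos hε hny)
  obtain ⟨ψ, hψ1, hψ2⟩ := exists_dual_vector ℝ y (norm_ne_zero_iff.mpr hy)
  refine ⟨δ₀ * ‖y‖, mul_pos hδ₀ hny, ψ, hψ1, by simpa using hψ2, ?_⟩
  intro z hz hψz
  have hψy : ψ y = ‖y‖ := by simpa using hψ2
  have key : 1 - δ₀ < ‖(1/2 : ℝ) • (‖y‖⁻¹ • z + ‖y‖⁻¹ • y)‖ := by
    have e1 : (1/2 : ℝ) • (‖y‖⁻¹ • z + ‖y‖⁻¹ • y) = ‖y‖⁻¹ • ((1/2 : ℝ) • (z + y)) := by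
      rw [← smul_add, smul_comm]
    rw [e1, norm_smul, Real.norm_eq_abs, abs_of_pos (by positivity)]
    have hlow : ‖y‖ - δ₀ * ‖y‖ < ‖(1/2 : ℝ) • (z + y)‖ := by
      have h2 : ψ ((1/2 : ℝ) • (z + y)) ≤ ‖(1/2 : ℝ) • (z + y)‖ := by
        calc ψ ((1/2 : ℝ) • (z + y)) ≤ |ψ ((1/2 : ℝ) • (z + y))| := le_abs_self _
          _ = ‖ψ ((1/2 : ℝ) • (z + y))‖ := (Real.norm_eq_abs _).symm
          _ ≤ ‖ψ‖ * ‖(1/2 : ℝ) • (z + y)‖ := ψ.le_opNorm _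
          _ = ‖(1/2 : ℝ) • (z + y)‖ := by rw [hψ1, one_mul]
      have h3 : ψ ((1/2 : ℝ) • (z + y)) = (1/2) * (ψ z + ψ y) := by
        rw [map_smul, map_add]; simp [smul_eq_mul]
      rw [h3, hψy] at h2
      nlinarith
    have h5 : (1 - δ₀) * ‖y‖ < ‖(1/2 : ℝ) • (z + y)‖ := by nlinarith
    calc 1 - δ₀ = ((1 - δ₀) * ‖y‖) * ‖y‖⁻¹ := by field_simp
      _ < ‖(1/2 : ℝ) • (z + y)‖ * ‖y‖⁻¹ := mul_lt_mul_of_pos_right h5 (by positivity)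
      _ = ‖y‖⁻¹ * ‖(1/2 : ℝ) • (z + y)‖ := mul_comm _ _
  have h4 := h (‖y‖⁻¹ • z)
    (by rw [norm_smul, Real.norm_eq_abs, abs_of_pos (by positivity)]
        calc ‖y‖⁻¹ * ‖z‖ ≤ ‖y‖⁻¹ * ‖y‖ := by
              exact mul_le_mul_of_nonneg_left hz (by positivity)
          _ = 1 := inv_mul_cancel₀ hny.ne') key
  have e2 : ‖y‖⁻¹ • z - ‖y‖⁻¹ • y = ‖y‖⁻¹ • (z - y) := (smul_sub _ _ _).symm
  rw [e2, norm_smul, Real.norm_eq_abs, abs_of_pos (by positivity)] at h4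
  calc ‖z - y‖ = ‖y‖ * (‖y‖⁻¹ * ‖z - y‖) := by field_simp
    _ < ‖y‖ * (ε / ‖y‖) := by exact mul_lt_mul_of_pos_left h4 hny
    _ = ε := by field_simp

lemma korovkin_key {X : Type*} [NormedAddCommGroup X] [NormedSpace ℝ X] (hLUR : IsLUR X)
    (S : Set (X →L[ℝ] X)) (hS1 : ∀ s ∈ S, ‖s‖ ≤ 1)
    (Y : Submodule ℝ X) (p : X →L[ℝ] X)
    (hwot : ∀ ε > (0:ℝ), ∀ (m : ℕ) (x : Fin m → X) (φ : Fin m → (X →L[ℝ] ℝ)),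
        ∃ T ∈ convexHull ℝ S, ∀ j : Fin m, |φ j (p (x j)) - φ j (T (x j))| < ε)
    (hpY : ∀ y ∈ Y, p y = y)
    (G : Finset X) (hGY : ∀ y ∈ G, y ∈ Y)
    {δ β ρ : ℝ} (hδ : 0 < δ) (hβ : 0 < β) (hρ : 0 < ρ)
    (k : ℕ) (xs : Fin k → X) (φs : Fin k → (X →L[ℝ] ℝ)) :
    ∃ (ι : Type) (t : Finset ι) (w : ι → ℝ) (z : ι → X →L[ℝ] X) (B : Finset ι),
      (∀ i ∈ t, 0 ≤ w i) ∧ (∑ i ∈ t, w i) = 1 ∧ (∀ i ∈ t, z i ∈ S) ∧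
      (∀ j : Fin k, |φs j (p (xs j)) - φs j (∑ i ∈ t, w i • z i (xs j))| < ρ) ∧
      B ⊆ t ∧ (∑ i ∈ B, w i) ≤ β ∧
      (∀ i ∈ t, i ∉ B → ∀ y ∈ G, ‖z i y - y‖ < δ) := by
  classical
  set G' : Finset X := G.filter (fun y => y ≠ 0) with hG'
  have hG'sub : G' ⊆ G := Finset.filter_subset _ _
  have hG'ne : ∀ y ∈ G', y ≠ 0 := fun y hy => (Finset.mem_filter.mp hy).2
  -- choose LUR data
  have hch : ∀ y : X, ∃ d : ℝ, ∃ ψ : X →L[ℝ] ℝ, y ∈ G' →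
      (0 < d ∧ ‖ψ‖ = 1 ∧ ψ y = ‖y‖ ∧
        ∀ z : X, ‖z‖ ≤ ‖y‖ → ‖y‖ - d < ψ z → ‖z - y‖ < δ) := by
    intro y
    by_cases hy : y ∈ G'
    · obtain ⟨d, hd, ψ, h1, h2, h3⟩ := lur_key hLUR y (hG'ne y hy) hδ
      exact ⟨d, ψ, fun _ => ⟨hd, h1, h2, h3⟩⟩
    · exact ⟨1, 0, fun h => absurd h hy⟩
  choose δf ψf hf using hch
  -- uniform lower bound on δf
  obtain ⟨η, hη0, hηle⟩ : ∃ η : ℝ, 0 < η ∧ ∀ y ∈ G', η ≤ δf y := by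
    by_cases hne : G'.Nonempty
    · refine ⟨G'.inf' hne δf, ?_, fun y hy => Finset.inf'_le _ hy⟩
      rw [Finset.lt_inf'_iff]
      exact fun y hy => (hf y hy).1
    · exact ⟨1, one_pos, fun y hy => absurd ⟨y, hy⟩ hne⟩
  have hcard0 : (0:ℝ) ≤ (G'.card:ℝ) := Nat.cast_nonneg _
  have hcard1 : (0:ℝ) < (G'.card:ℝ) + 1 := by linarith
  set ρ' : ℝ := min ρ (β * η / ((G'.card:ℝ) + 1)) with hρ'
  have hρ'0 : 0 < ρ' := lt_min hρ (div_pos (mul_pos hβ hη0) hcard1)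
  -- apply hwot
  set c : ℕ := G'.card with hc
  set e : {a // a ∈ G'} ≃ Fin c := G'.equivFin with he
  set pts : Fin (c + k) → X :=
    fun i => Fin.addCases (fun i₀ => ((e.symm i₀ : {a // a ∈ G'}) : X)) xs i with hpts
  set fns : Fin (c + k) → (X →L[ℝ] ℝ) :=
    fun i => Fin.addCases (fun i₀ => ψf ((e.symm i₀ : {a // a ∈ G'}) : X)) φs i with hfns
  obtain ⟨T, hTconv, hTclose⟩ := hwot ρ' hρ'0 (c + k) pts fns
  rw [convexHull_eq] at hTconv
  obtain ⟨ι, t, w, z, hw0, hw1, hzS, hTeq⟩ := hTconv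
  have hTapp : ∀ v : X, T v = ∑ i ∈ t, w i • z i v := by
    intro v
    rw [← hTeq, Finset.centerMass_eq_of_sum_1 _ _ hw1]
    simp [ContinuousLinearMap.sum_apply]
  -- closeness at y ∈ G'
  have hcloseY : ∀ y (hy : y ∈ G'), |ψf y (p y) - ψf y (T y)| < ρ' := by
    intro y hy
    have := hTclose (Fin.castAdd k (e ⟨y, hy⟩))
    simpa [hpts, hfns] using this
  -- closeness at xs
  have hcloseX : ∀ j : Fin k, |φs j (p (xs j)) - φs j (T (xs j))| < ρ' := by
    intro j
    have := hTclose (Fin.natAdd c j)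
    simpa [hpts, hfns] using this
  -- norm bound for z i y
  have hzy : ∀ i ∈ t, ∀ y : X, ‖z i y‖ ≤ ‖y‖ := by
    intro i hi y
    calc ‖z i y‖ ≤ ‖z i‖ * ‖y‖ := (z i).le_opNorm y
      _ ≤ 1 * ‖y‖ := mul_le_mul_of_nonneg_right (hS1 _ (hzS i hi)) (norm_nonneg y)
      _ = ‖y‖ := one_mul _
  have hψz_le : ∀ y ∈ G', ∀ i ∈ t, ψf y (z i y) ≤ ‖y‖ := by
    intro y hy i hi
    calc ψf y (z i y) ≤ |ψf y (z i y)| := le_abs_self _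
      _ = ‖ψf y (z i y)‖ := (Real.norm_eq_abs _).symm
      _ ≤ ‖ψf y‖ * ‖z i y‖ := (ψf y).le_opNorm _
      _ = ‖z i y‖ := by rw [(hf y hy).2.1, one_mul]
      _ ≤ ‖y‖ := hzy i hi y
  -- per-y bad set bound
  set Bf : X → Finset ι := fun y => t.filter (fun i => ψf y (z i y) ≤ ‖y‖ - δf y) with hBf
  have hBy : ∀ y ∈ G', (∑ i ∈ Bf y, w i) ≤ ρ' / η := by
    intro y hy
    have hyY : y ∈ Y := hGY y (hG'sub hy)
    have h1 : ∑ i ∈ t, w i * (‖y‖ - ψf y (z i y)) < ρ' := by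
      have e1 : ∑ i ∈ t, w i * (‖y‖ - ψf y (z i y))
          = ‖y‖ - ψf y (T y) := by
        rw [hTapp y, map_sum]
        simp only [map_smul, smul_eq_mul, mul_sub]
        rw [Finset.sum_sub_distrib, ← Finset.sum_mul, hw1, one_mul]
      have h2 := hcloseY y hy
      rw [hpY y hyY, (hf y hy).2.2.1] at h2
      calc ∑ i ∈ t, w i * (‖y‖ - ψf y (z i y)) = ‖y‖ - ψf y (T y) := e1
        _ ≤ |‖y‖ - ψf y (T y)| := le_abs_self _
        _ < ρ' := h2
    have hterm : ∀ i ∈ t, 0 ≤ w i * (‖y‖ - ψf y (z i y)) :=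
      fun i hi => mul_nonneg (hw0 i hi) (by linarith [hψz_le y hy i hi])
    have h2 : η * ∑ i ∈ Bf y, w i ≤ ∑ i ∈ Bf y, w i * (‖y‖ - ψf y (z i y)) := by
      rw [Finset.mul_sum]
      refine Finset.sum_le_sum fun i hi => ?_
      obtain ⟨hit, hcond⟩ := Finset.mem_filter.mp hi
      have : δf y ≤ ‖y‖ - ψf y (z i y) := by linarith
      calc η * w i = w i * η := mul_comm _ _
        _ ≤ w i * (‖y‖ - ψf y (z i y)) :=
          mul_le_mul_of_nonneg_left ((hηle y hy).trans this) (hw0 i hit)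
    have h3 : ∑ i ∈ Bf y, w i * (‖y‖ - ψf y (z i y))
        ≤ ∑ i ∈ t, w i * (‖y‖ - ψf y (z i y)) :=
      Finset.sum_le_sum_of_subset_of_nonneg (Finset.filter_subset _ _)
        (fun i hi _ => hterm i hi)
    rw [le_div_iff₀ hη0, mul_comm]
    linarith
  -- global bad set
  set B : Finset ι := t.filter (fun i => ∃ y ∈ G', ψf y (z i y) ≤ ‖y‖ - δf y) with hB
  have hBsub : B ⊆ t := Finset.filter_subset _ _
  have hBw : (∑ i ∈ B, w i) ≤ β := by
    set w' : ι → ℝ := fun i => if i ∈ t then w i else 0 with hw'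
    have hw'0 : ∀ i, 0 ≤ w' i := by
      intro i; by_cases h : i ∈ t <;> simp [hw', h, hw0 i]
    have hBsub2 : B ⊆ G'.biUnion Bf := by
      intro i hi
      obtain ⟨hit, y, hy, hcond⟩ := Finset.mem_filter.mp hi
      exact Finset.mem_biUnion.mpr ⟨y, hy, Finset.mem_filter.mpr ⟨hit, hcond⟩⟩
    have e1 : ∑ i ∈ B, w i = ∑ i ∈ B, w' i :=
      Finset.sum_congr rfl fun i hi => by simp [hw', hBsub hi]
    have h2 : ∑ i ∈ B, w' i ≤ ∑ i ∈ G'.biUnion Bf, w' i :=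
      Finset.sum_le_sum_of_subset_of_nonneg hBsub2 (fun i _ _ => hw'0 i)
    have h3 : ∑ i ∈ G'.biUnion Bf, w' i ≤ ∑ y ∈ G', ∑ i ∈ Bf y, w' i :=
      sum_biUnion_le_aux w' hw'0 G' Bf
    have h4 : ∀ y ∈ G', ∑ i ∈ Bf y, w' i ≤ ρ' / η := by
      intro y hy
      have : ∑ i ∈ Bf y, w' i = ∑ i ∈ Bf y, w i :=
        Finset.sum_congr rfl fun i hi => by
          simp [hw', (Finset.filter_subset _ _ : Bf y ⊆ t) hi]
      rw [this]; exact hBy y hy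
    have h5 : ∑ y ∈ G', ∑ i ∈ Bf y, w' i ≤ G'.card * (ρ' / η) := by
      calc ∑ y ∈ G', ∑ i ∈ Bf y, w' i ≤ ∑ _y ∈ G', ρ' / η := Finset.sum_le_sum h4
        _ = G'.card * (ρ' / η) := by rw [Finset.sum_const, nsmul_eq_mul]
    have h6 : (G'.card : ℝ) * (ρ' / η) ≤ β := by
      have hρ'2 : ρ' ≤ β * η / ((G'.card:ℝ) + 1) := min_le_right _ _
      have hcard : (0:ℝ) ≤ G'.card := Nat.cast_nonneg _
      have hc1 : (0:ℝ) < (G'.card:ℝ) + 1 := by linarith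
      have hd : ρ' / η ≤ β / ((G'.card:ℝ) + 1) := by
        rw [div_le_div_iff₀ hη0 hc1]
        calc ρ' * ((G'.card:ℝ)+1) ≤ (β * η / ((G'.card:ℝ)+1)) * ((G'.card:ℝ)+1) :=
              mul_le_mul_of_nonneg_right hρ'2 hc1.le
          _ = β * η := div_mul_cancel₀ _ hc1.ne'
      calc (G'.card:ℝ) * (ρ'/η) ≤ (G'.card:ℝ) * (β/((G'.card:ℝ)+1)) :=
            mul_le_mul_of_nonneg_left hd hcard
        _ ≤ β := by
            rw [mul_div_assoc', div_le_iff₀ hc1]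
            nlinarith
    linarith
  refine ⟨ι, t, w, z, B, hw0, hw1, hzS, ?_, hBsub, hBw, ?_⟩
  · intro j
    have := hcloseX j
    rw [hTapp] at this
    exact this.trans_le (min_le_left _ _)
  · intro i hit hiB y hyG
    by_cases hy0 : y = 0
    · simp [hy0, hδ]
    · have hyG' : y ∈ G' := Finset.mem_filter.mpr ⟨hyG, hy0⟩
      have hnot : ¬ (∃ y ∈ G', ψf y (z i y) ≤ ‖y‖ - δf y) := by
        intro hcon
        exact hiB (Finset.mem_filter.mpr ⟨hit, hcon⟩)
      push_neg at hnot
      exact (hf y hyG').2.2.2 (z i y) (hzy i hit y) (hnot y hyG')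

/-- If `X` has a LUR norm, `S` is a semigroup of linear contractions,
`Y` a subspace, and `p` is a contractive linear projection in the WOT-closure of
`conv(S)` with `p = id` on `Y`, then the Korovkin envelope `Env_S(Y)` (described via
nets in `S`, here via filters on the operator space) is contained in the range of `p`. -/
theorem korovkin_envelope_subset_range_proj
    {X : Type*} [NormedAddCommGroup X] [NormedSpace ℝ X]
    (hLUR : IsLUR X)
    (S : Set (X →L[ℝ] X))
    (hS1 : ∀ s ∈ S, ‖s‖ ≤ 1)
    (hS2 : ∀ s ∈ S, ∀ t ∈ S, s.comp t ∈ S)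
    (Y : Submodule ℝ X)
    (p : X →L[ℝ] X) (hp1 : ‖p‖ ≤ 1) (hpp : p.comp p = p)
    (hwot : ∀ ε > (0:ℝ), ∀ (m : ℕ) (x : Fin m → X) (φ : Fin m → (X →L[ℝ] ℝ)),
        ∃ T ∈ convexHull ℝ S, ∀ j : Fin m, |φ j (p (x j)) - φ j (T (x j))| < ε)
    (hpY : ∀ y ∈ Y, p y = y)
    (x : X)
    (hx : ∀ F : Filter (X →L[ℝ] X), F.NeBot → F ≤ Filter.principal S →
        (∀ y ∈ Y, Tendsto (fun T => T y) F (nhds y)) →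
        Tendsto (fun T => T x) F (nhds x)) :
    x ∈ LinearMap.range (p : X →ₗ[ℝ] X) := by
  classical
  suffices hpx : p x = x from LinearMap.mem_range.mpr ⟨x, hpx⟩
  -- the filter of operators in `S` close to the identity on finite subsets of `Y`
  set A : ℕ × Finset Y → Set (X →L[ℝ] X) := fun q =>
    {s | s ∈ S ∧ ∀ y ∈ q.2, ‖s (y:X) - (y:X)‖ < 1/((q.1:ℝ)+1)} with hA
  have hAmono : ∀ a b : ℕ × Finset Y, a.1 ≤ b.1 → a.2 ⊆ b.2 → A b ⊆ A a := by
    rintro a b h1 h2 s ⟨hsS, hs⟩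
    refine ⟨hsS, fun y hy => ?_⟩
    refine lt_of_lt_of_le (hs y (h2 hy)) ?_
    apply one_div_le_one_div_of_le
    · positivity
    · have : (a.1:ℝ) ≤ b.1 := Nat.cast_le.mpr h1
      linarith
  have hdir : Directed (· ≥ ·) (fun q : ℕ × Finset Y => (𝓟 (A q) : Filter (X →L[ℝ] X))) := by
    intro a b
    refine ⟨(max a.1 b.1, a.2 ∪ b.2), ?_, ?_⟩
    · exact Filter.principal_mono.mpr
        (hAmono a _ (le_max_left _ _) Finset.subset_union_left)
    · exact Filter.principal_mono.mpr
        (hAmono b _ (le_max_right _ _) Finset.subset_union_right)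
  -- nonemptiness of the basis sets
  have hexists : ∀ (G : Finset X), (∀ y ∈ G, y ∈ Y) → ∀ δ > (0:ℝ),
      ∃ s ∈ S, ∀ y ∈ G, ‖s y - y‖ < δ := by
    intro G hGY δ hδ
    obtain ⟨ι, t, w, z, B, hw0, hw1, hzS, _, hBsub, hBw, hgood⟩ :=
      korovkin_key hLUR S hS1 Y p hwot hpY G hGY hδ (β := 1/2) one_half_pos
        (ρ := 1) one_pos 0 Fin.elim0 Fin.elim0
    have hne : (t \ B).Nonempty := by
      rw [Finset.sdiff_nonempty]
      intro hsub
      have hBt : B = t := Finset.Subset.antisymm hBsub hsub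
      rw [hBt, hw1] at hBw
      norm_num at hBw
    obtain ⟨i, hi⟩ := hne
    rw [Finset.mem_sdiff] at hi
    exact ⟨z i, hzS i hi.1, hgood i hi.1 hi.2⟩
  set F : Filter (X →L[ℝ] X) := ⨅ q : ℕ × Finset Y, 𝓟 (A q) with hF
  have hFmem : ∀ q, A q ∈ F := fun q =>
    Filter.mem_iInf_of_mem q (Filter.mem_principal_self _)
  have hnebot : F.NeBot := by
    refine Filter.iInf_neBot_of_directed hdir ?_
    intro q
    rw [Filter.principal_neBot_iff]
    obtain ⟨s, hsS, hs⟩ := hexists (q.2.image (fun (y : Y) => (y : X)))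
      (by
        intro v hv
        obtain ⟨u, _, rfl⟩ := Finset.mem_image.mp hv
        exact u.2)
      (1/((q.1:ℝ)+1)) (by positivity)
    exact ⟨s, hsS, fun y hy => hs _ (Finset.mem_image_of_mem _ hy)⟩
  have hle : F ≤ 𝓟 S :=
    le_trans (iInf_le _ ((0 : ℕ), (∅ : Finset Y)))
      (Filter.principal_mono.mpr (fun s hs => hs.1))
  have hYconv : ∀ y ∈ Y, Tendsto (fun T : X →L[ℝ] X => T y) F (nhds y) := by
    intro y hy
    rw [Metric.tendsto_nhds]
    intro ε hε
    obtain ⟨n, hn⟩ := exists_nat_one_div_lt hε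
    refine Filter.mem_of_superset (hFmem (n, {⟨y, hy⟩})) ?_
    rintro s ⟨hsS, hs⟩
    have := hs ⟨y, hy⟩ (Finset.mem_singleton_self _)
    simpa [dist_eq_norm] using this.trans hn
  have htx := hx F hnebot hle hYconv
  rw [Metric.tendsto_nhds] at htx
  have hkey : ∀ φ : X →L[ℝ] ℝ, φ (p x - x) = 0 := by
    intro φ
    have hbound : ∀ ε > (0:ℝ), |φ (p x - x)| ≤ ε * (1 + 2 * ‖φ‖) := by
      intro ε hε
      obtain ⟨q, hq⟩ := (Filter.mem_iInf_of_directed hdir _).mp (htx ε hε)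
      rw [Filter.mem_principal] at hq
      have hx2 : (0:ℝ) < 2 * ‖x‖ + 1 := by positivity
      obtain ⟨ι, t, w, z, B, hw0, hw1, hzS, hclose, hBsub, hBw, hgood⟩ :=
        korovkin_key hLUR S hS1 Y p hwot hpY (q.2.image (fun (y : Y) => (y : X)))
          (by
            intro v hv
            obtain ⟨u, _, rfl⟩ := Finset.mem_image.mp hv
            exact u.2)
          (δ := 1/((q.1:ℝ)+1)) (by positivity) (β := ε/(2*‖x‖+1))
          (div_pos hε hx2) hε 1 (fun _ => x) (fun _ => φ)
      have hclose0 := hclose 0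
      set Tx : X := ∑ i ∈ t, w i • z i x with hTx
      have hTxx : ‖Tx - x‖ ≤ 2 * ε := by
        have e1 : Tx - x = ∑ i ∈ t, w i • (z i x - x) := by
          rw [hTx]
          simp only [smul_sub, Finset.sum_sub_distrib, ← Finset.sum_smul, hw1, one_smul]
        rw [e1]
        have e2 : ‖∑ i ∈ t, w i • (z i x - x)‖ ≤ ∑ i ∈ t, w i * ‖z i x - x‖ := by
          refine (norm_sum_le _ _).trans ?_
          refine le_of_eq (Finset.sum_congr rfl fun i hi => ?_)
          rw [norm_smul, Real.norm_eq_abs, abs_of_nonneg (hw0 i hi)]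
        refine e2.trans ?_
        rw [← Finset.sum_sdiff hBsub]
        have hgb : ∑ i ∈ t \ B, w i * ‖z i x - x‖ ≤ ∑ i ∈ t \ B, w i * ε := by
          refine Finset.sum_le_sum fun i hi => ?_
          rw [Finset.mem_sdiff] at hi
          have hziA : z i ∈ A q := by
            refine ⟨hzS i hi.1, fun y hy => ?_⟩
            exact hgood i hi.1 hi.2 _ (Finset.mem_image_of_mem _ hy)
          have := hq hziA
          rw [Set.mem_setOf_eq, dist_eq_norm] at this
          exact mul_le_mul_of_nonneg_left this.le (hw0 i hi.1)
        have hbb : ∑ i ∈ B, w i * ‖z i x - x‖ ≤ ∑ i ∈ B, w i * (2*‖x‖) := by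
          refine Finset.sum_le_sum fun i hi => ?_
          have h1 : ‖z i x - x‖ ≤ 2 * ‖x‖ := by
            have h2 : ‖z i x‖ ≤ ‖x‖ := by
              calc ‖z i x‖ ≤ ‖z i‖ * ‖x‖ := (z i).le_opNorm x
                _ ≤ 1 * ‖x‖ := mul_le_mul_of_nonneg_right
                    (hS1 _ (hzS i (hBsub hi))) (norm_nonneg x)
                _ = ‖x‖ := one_mul _
            calc ‖z i x - x‖ ≤ ‖z i x‖ + ‖x‖ := norm_sub_le _ _
              _ ≤ 2 * ‖x‖ := by linarith
          exact mul_le_mul_of_nonneg_left h1 (hw0 i (hBsub hi))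
        have hsum1 : ∑ i ∈ t \ B, w i ≤ 1 := by
          have := Finset.sum_sdiff hBsub (f := w)
          have hB0 : 0 ≤ ∑ i ∈ B, w i :=
            Finset.sum_nonneg fun i hi => hw0 i (hBsub hi)
          rw [hw1] at this
          linarith
        have hfin1 : ∑ i ∈ t \ B, w i * ε ≤ ε := by
          rw [← Finset.sum_mul]
          nlinarith [Finset.sum_nonneg (fun i (hi : i ∈ t \ B) =>
            hw0 i (Finset.mem_sdiff.mp hi).1)]
        have hfin2 : ∑ i ∈ B, w i * (2*‖x‖) ≤ ε := by
          rw [← Finset.sum_mul]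
          have h3 : (∑ i ∈ B, w i) * (2*‖x‖) ≤ (ε/(2*‖x‖+1)) * (2*‖x‖) :=
            mul_le_mul_of_nonneg_right hBw (by positivity)
          refine h3.trans ?_
          rw [div_mul_eq_mul_div, div_le_iff₀ hx2]
          nlinarith [norm_nonneg x]
        linarith
      have habs1 : |φ (p x) - φ Tx| < ε := hclose0
      have habs2 : |φ Tx - φ x| ≤ ‖φ‖ * (2 * ε) := by
        have : |φ Tx - φ x| = ‖φ (Tx - x)‖ := by
          rw [map_sub, Real.norm_eq_abs]
        rw [this]
        calc ‖φ (Tx - x)‖ ≤ ‖φ‖ * ‖Tx - x‖ := φ.le_opNorm _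
          _ ≤ ‖φ‖ * (2 * ε) := mul_le_mul_of_nonneg_left hTxx (norm_nonneg φ)
      calc |φ (p x - x)| = |(φ (p x) - φ Tx) + (φ Tx - φ x)| := by
            rw [map_sub]; ring_nf
        _ ≤ |φ (p x) - φ Tx| + |φ Tx - φ x| := abs_add_le _ _
        _ ≤ ε + ‖φ‖ * (2 * ε) := add_le_add habs1.le habs2
        _ = ε * (1 + 2 * ‖φ‖) := by ring
    have hc : (0:ℝ) < 1 + 2 * ‖φ‖ := by positivity
    have h0 : |φ (p x - x)| ≤ 0 := by
      by_contra hcon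
      push_neg at hcon
      have h1 := hbound (|φ (p x - x)| / (2 * (1 + 2 * ‖φ‖)))
        (by positivity)
      have h2 : (1 + 2 * ‖φ‖) * (|φ (p x - x)| / (2 * (1 + 2 * ‖φ‖)))
          = |φ (p x - x)| / 2 := by
        field_simp
      rw [mul_comm] at h1
      rw [h2] at h1
      linarith
    have := abs_eq_zero.mp (le_antisymm h0 (abs_nonneg _))
    exact this
  have hz : p x - x = 0 := NormedSpace.eq_zero_of_forall_dual_eq_zero ℝ hkey
  exact sub_eq_zero.mp hz
end

section
/- Let X be a Banach space and Y a closed subspace. If γ : Y → X is a linear isometric embedding that is a pointwise limit of restrictions to Y of surjective linear isometries of X (a strong isometric embedding), and γ(Y) = Z, then the inverse map γ⁻¹ : Z → Y, viewed as a map into X, is also a pointwise limit of restrictions to Z of surjective linear isometries of X. -/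
/-- `γ : Y → X` is a strong isometric embedding: it lies in the SOT-closure of the set
of restrictions to `Y` of surjective linear isometries of `X`, i.e. it is approximable
on every finite set by surjective isometries of `X`. -/
def IsStrongEmb {X : Type*} [NormedAddCommGroup X] [NormedSpace ℝ X]
    (Y : Submodule ℝ X) (γ : Y →ₗᵢ[ℝ] X) : Prop :=
  ∀ ε > (0:ℝ), ∀ s : Finset Y, ∃ T : X ≃ₗᵢ[ℝ] X, ∀ y ∈ s, ‖T (y : X) - γ y‖ ≤ ε

/-- The inverse of a strong partial isometry is a strong partial isometry:
if `γ : Y → X` is a strong isometric embedding with image `Z`, then the inverse map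
`Z → Y ⊆ X` is a strong isometric embedding of `Z` into `X`. -/
theorem inverse_of_strong_partial_isometry
    {X : Type*} [NormedAddCommGroup X] [NormedSpace ℝ X] [CompleteSpace X]
    (Y Z : Submodule ℝ X) (hY : IsClosed (Y : Set X)) (hZ : IsClosed (Z : Set X))
    (γ : Y →ₗᵢ[ℝ] X)
    (hrange : Set.range γ = (Z : Set X))
    (hγ : IsStrongEmb Y γ) :
    ∃ δ : Z →ₗᵢ[ℝ] X,
      (∀ (y : Y) (z : Z), (z : X) = γ y → δ z = (y : X)) ∧ IsStrongEmb Z δ := by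
  classical
  -- corestrict γ to Z
  have hmem : ∀ y : Y, γ y ∈ Z := fun y => by
    have : γ y ∈ Set.range γ := ⟨y, rfl⟩
    rwa [hrange] at this
  let γ' : Y →ₗᵢ[ℝ] Z :=
    { toLinearMap := LinearMap.codRestrict Z γ.toLinearMap hmem
      norm_map' := fun y => γ.norm_map y }
  have hsurj : Function.Surjective γ' := by
    intro z
    have : (z : X) ∈ Set.range γ := by rw [hrange]; exact z.2
    obtain ⟨y, hy⟩ := this
    exact ⟨y, Subtype.ext hy⟩
  let e : Y ≃ₗᵢ[ℝ] Z := LinearIsometryEquiv.ofSurjective γ' hsurj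
  have he : ∀ y : Y, ((e y : Z) : X) = γ y := fun y => rfl
  let δ : Z →ₗᵢ[ℝ] X := (Y.subtypeₗᵢ : Y →ₗᵢ[ℝ] X).comp (e.symm.toLinearIsometry : Z →ₗᵢ[ℝ] Y)
  have hδ : ∀ (y : Y) (z : Z), (z : X) = γ y → δ z = (y : X) := by
    intro y z hzy
    have : e y = z := Subtype.ext (by rw [he]; exact hzy.symm)
    show ((e.symm z : Y) : X) = (y : X)
    rw [← this, e.symm_apply_apply]
  refine ⟨δ, hδ, ?_⟩
  intro ε hε s
  obtain ⟨T, hT⟩ := hγ ε hε (s.image fun z => e.symm z)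
  refine ⟨T.symm, fun z hz => ?_⟩
  have hy : e.symm z ∈ s.image fun z => e.symm z := Finset.mem_image_of_mem _ hz
  have h1 := hT _ hy
  have hez : γ (e.symm z) = (z : X) := by
    rw [← he, e.apply_symm_apply]
  rw [hez] at h1
  have : T.symm (z : X) - δ z = T.symm ((z : X) - T ((e.symm z : Y) : X)) := by
    simp [δ, sub_eq_iff_eq_add]
  rw [this, T.symm.norm_map, norm_sub_rev]
  exact h1
end

section
/- Let X be a Banach space and Y a closed subspace. If γ : Y → Y' and δ : Y' → Y'' are strong partial isometries between subspaces of X, then the composition δ ∘ γ : Y → Y'' is a strong partial isometry. -/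
/-- The composition of two strong partial isometries is a strong partial
isometry: if `γ : Y → X` is strong with image `Y'` and `δ : Y' → X` is strong with
image `Y''`, then `δ ∘ γ : Y → X` is a strong isometric embedding with image `Y''`. -/
theorem comp_of_strong_partial_isometries
    {X : Type*} [NormedAddCommGroup X] [NormedSpace ℝ X] [CompleteSpace X]
    (Y Y' Y'' : Submodule ℝ X)
    (hY : IsClosed (Y : Set X)) (hY' : IsClosed (Y' : Set X)) (hY'' : IsClosed (Y'' : Set X))
    (γ : Y →ₗᵢ[ℝ] X) (δ : Y' →ₗᵢ[ℝ] X)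
    (hγr : Set.range γ = (Y' : Set X)) (hδr : Set.range δ = (Y'' : Set X))
    (hγ : IsStrongEmb Y γ) (hδ : IsStrongEmb Y' δ) :
    ∃ η : Y →ₗᵢ[ℝ] X,
      (∀ (y : Y) (z : Y'), (z : X) = γ y → η y = δ z) ∧
      Set.range η = (Y'' : Set X) ∧ IsStrongEmb Y η := by
  have hmem : ∀ y : Y, γ y ∈ Y' := fun y => by
    have : γ y ∈ Set.range γ := Set.mem_range_self y
    rwa [hγr] at this
  -- corestriction of γ to Y'
  let γ' : Y →ₗᵢ[ℝ] Y' :=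
    { toLinearMap := γ.toLinearMap.codRestrict Y' hmem
      norm_map' := fun y => γ.norm_map y }
  have hγ'surj : Function.Surjective γ' := by
    intro z
    have : (z : X) ∈ Set.range γ := hγr ▸ z.2
    obtain ⟨y, hy⟩ := this
    exact ⟨y, Subtype.ext hy⟩
  refine ⟨δ.comp γ', ?_, ?_, ?_⟩
  · intro y z hz
    have : γ' y = z := Subtype.ext hz.symm
    simp [LinearIsometry.comp_apply, this]
  · rw [← hδr]
    ext x
    constructor
    · rintro ⟨y, rfl⟩; exact ⟨γ' y, rfl⟩
    · rintro ⟨z, rfl⟩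
      obtain ⟨y, rfl⟩ := hγ'surj z
      exact ⟨y, rfl⟩
  · intro ε hε s
    obtain ⟨T, hT⟩ := hγ (ε / 2) (by linarith) s
    classical
    obtain ⟨S, hS⟩ := hδ (ε / 2) (by linarith) (s.image fun y => γ' y)
    refine ⟨T.trans S, fun y hy => ?_⟩
    have h1 : ‖S (T (y : X)) - S (γ y)‖ ≤ ε / 2 := by
      rw [← map_sub, S.norm_map]
      exact hT y hy
    have h2 : ‖S (γ y) - δ (γ' y)‖ ≤ ε / 2 := by
      have := hS (γ' y) (Finset.mem_image_of_mem _ hy)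
      exact this
    calc ‖(T.trans S) (y : X) - (δ.comp γ') y‖
        = ‖(S (T (y : X)) - S (γ y)) + (S (γ y) - δ (γ' y))‖ := by
          simp [LinearIsometryEquiv.trans_apply, LinearIsometry.comp_apply]
      _ ≤ ε / 2 + ε / 2 := le_trans (norm_add_le _ _) (add_le_add h1 h2)
      _ = ε := by ring
end

section
/- Let X be a Banach space and Y a closed subspace. The set Isom_s(Y) of surjective linear isometries of Y that, viewed as maps into X, are pointwise limits of restrictions to Y of surjective linear isometries of X, forms a subgroup of the group of surjective linear isometries of Y, closed in the strong operator topology. -/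
/-- The set of strong isometries of a closed subspace `Y` of `X`: surjective linear
isometries of `Y` which, viewed as maps into `X`, are pointwise limits of restrictions
to `Y` of surjective linear isometries of `X` (finite-set approximation). -/
def strongIsoms {X : Type*} [NormedAddCommGroup X] [NormedSpace ℝ X]
    (Y : Submodule ℝ X) : Set (Y ≃ₗᵢ[ℝ] Y) :=
  {t | ∀ ε > (0:ℝ), ∀ s : Finset Y, ∃ T : X ≃ₗᵢ[ℝ] X,
    ∀ y ∈ s, ‖T (y : X) - ((t y : Y) : X)‖ ≤ ε}

/-- `Isom_s(Y)` is a subgroup of the group of surjective linear isometries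
of `Y` which is closed in the strong operator topology. -/
theorem strongIsoms_closed_subgroup
    {X : Type*} [NormedAddCommGroup X] [NormedSpace ℝ X] [CompleteSpace X]
    (Y : Submodule ℝ X) (hY : IsClosed (Y : Set X)) :
    (LinearIsometryEquiv.refl ℝ Y ∈ strongIsoms Y) ∧
    (∀ t ∈ strongIsoms Y, ∀ u ∈ strongIsoms Y, t.trans u ∈ strongIsoms Y) ∧
    (∀ t ∈ strongIsoms Y, t.symm ∈ strongIsoms Y) ∧
    (∀ t : Y ≃ₗᵢ[ℝ] Y,
      (∀ ε > (0:ℝ), ∀ s : Finset Y, ∃ u ∈ strongIsoms Y, ∀ y ∈ s, ‖u y - t y‖ ≤ ε) →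
      t ∈ strongIsoms Y) := by
  classical
  refine ⟨?_, ?_, ?_, ?_⟩
  · intro ε hε s
    exact ⟨LinearIsometryEquiv.refl ℝ X, fun y _ => by simp [hε.le]⟩
  · intro t ht u hu ε hε s
    obtain ⟨Tt, hTt⟩ := ht (ε / 2) (by linarith) s
    obtain ⟨Tu, hTu⟩ := hu (ε / 2) (by linarith) (s.image t)
    refine ⟨Tt.trans Tu, fun y hy => ?_⟩
    have h1 := hTt y hy
    have h2 := hTu (t y) (Finset.mem_image_of_mem _ hy)
    have key : (Tt.trans Tu) (y : X) - ((u (t y) : Y) : X)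
        = (Tu (Tt (y : X)) - Tu ((t y : Y) : X)) + (Tu ((t y : Y) : X) - ((u (t y) : Y) : X)) := by
      simp [LinearIsometryEquiv.trans_apply]
    calc ‖(Tt.trans Tu) (y : X) - ((t.trans u) y : X)‖
        ≤ ‖Tu (Tt (y : X)) - Tu ((t y : Y) : X)‖ + ‖Tu ((t y : Y) : X) - ((u (t y) : Y) : X)‖ := by
          rw [show ((t.trans u) y : X) = ((u (t y) : Y) : X) from rfl, key]
          exact norm_add_le _ _
      _ ≤ ε / 2 + ε / 2 := by
          have : ‖Tu (Tt (y : X)) - Tu ((t y : Y) : X)‖ = ‖Tt (y : X) - ((t y : Y) : X)‖ := by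
            rw [← map_sub, Tu.norm_map]
          rw [this]; exact add_le_add h1 h2
      _ = ε := by ring
  · intro t ht ε hε s
    obtain ⟨T, hT⟩ := ht ε hε (s.image t.symm)
    refine ⟨T.symm, fun y hy => ?_⟩
    have h := hT (t.symm y) (Finset.mem_image_of_mem _ hy)
    rw [t.apply_symm_apply] at h
    have key : T.symm (y : X) - ((t.symm y : Y) : X)
        = T.symm ((y : X) - T ((t.symm y : Y) : X)) := by
      rw [map_sub, T.symm_apply_apply]
    rw [key, T.symm.norm_map, norm_sub_rev]
    exact h
  · intro t hclos ε hε s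
    obtain ⟨u, hu, hus⟩ := hclos (ε / 2) (by linarith) s
    obtain ⟨T, hT⟩ := hu (ε / 2) (by linarith) s
    refine ⟨T, fun y hy => ?_⟩
    have h1 := hT y hy
    have h2 : ‖((u y : Y) : X) - ((t y : Y) : X)‖ ≤ ε / 2 := hus y hy
    calc ‖T (y : X) - ((t y : Y) : X)‖
        ≤ ‖T (y : X) - ((u y : Y) : X)‖ + ‖((u y : Y) : X) - ((t y : Y) : X)‖ :=
          norm_sub_le_norm_sub_add_norm_sub _ _ _
      _ ≤ ε / 2 + ε / 2 := add_le_add h1 h2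
      _ = ε := by ring
end

section
/- Let 1 ≤ p < ∞ with p ≠ 2 and let X = L_p[0,1]. If Y is a finite-dimensional unital sublattice of X (i.e., the span of indicator functions of a finite measurable partition of [0,1]), then the algebraic envelope of Y with respect to the isometry group of X equals Y: every f ∈ L_p fixed by all surjective isometries of L_p that fix Y pointwise belongs to Y. -/
open MeasureTheory
open scoped ENNReal


open Set Filter Metric
open scoped Topology unitInterval

namespace EnvAux

/-- Either `g` is a.e. constant w.r.t. `μ`, or some level `c` has positive measure on both
sides. -/
lemma ae_const_or_levels {α : Type*} [MeasurableSpace α] (μ : Measure α) (g : α → ℝ) :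
    (∃ c : ℝ, ∀ᵐ x ∂μ, g x = c) ∨
      (∃ c : ℝ, μ {x | g x < c} ≠ 0 ∧ μ {x | c < g x} ≠ 0) := by
  by_cases hμ : μ Set.univ = 0
  · exact Or.inl ⟨0, ae_iff.2 (measure_mono_null (subset_univ _) hμ)⟩
  by_cases hall : ∀ c : ℝ, μ {x | g x < c} = 0 ∨ μ {x | c < g x} = 0
  swap
  · push_neg at hall; exact Or.inr hall
  left
  set Q : Set ℚ := {q : ℚ | μ {x | (q : ℝ) < g x} = 0} with hQdef
  have hlow : ∃ q : ℚ, μ {x | g x < (q : ℝ)} ≠ 0 := by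
    by_contra h; push_neg at h
    have h0 : μ (⋃ q : ℚ, {x | g x < (q : ℝ)}) = 0 := measure_iUnion_null h
    have huniv : (⋃ q : ℚ, {x | g x < (q : ℝ)}) = univ :=
      eq_univ_of_forall fun x => by
        obtain ⟨q, hq⟩ := exists_rat_gt (g x); exact mem_iUnion.2 ⟨q, hq⟩
    rw [huniv] at h0; exact hμ h0
  obtain ⟨q₀, hq₀⟩ := hlow
  have hQne : Q.Nonempty := ⟨q₀, (hall q₀).resolve_left hq₀⟩
  have hbdd : BddBelow ((fun q : ℚ => (q : ℝ)) '' Q) := by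
    by_contra hb
    rw [not_bddBelow_iff] at hb
    have hq : ∀ q : ℚ, μ {x | (q : ℝ) < g x} = 0 := by
      intro q
      obtain ⟨y, ⟨r, hrQ, rfl⟩, hy⟩ := hb (q : ℝ)
      exact measure_mono_null (fun x hx => lt_trans hy hx) hrQ
    have h0 : μ (⋃ q : ℚ, {x | (q : ℝ) < g x}) = 0 := measure_iUnion_null hq
    have huniv : (⋃ q : ℚ, {x | (q : ℝ) < g x}) = univ :=
      eq_univ_of_forall fun x => by
        obtain ⟨q, hq⟩ := exists_rat_lt (g x); exact mem_iUnion.2 ⟨q, hq⟩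
    rw [huniv] at h0; exact hμ h0
  set c := sInf ((fun q : ℚ => (q : ℝ)) '' Q) with hcdef
  refine ⟨c, ?_⟩
  have h1 : μ {x | c < g x} = 0 := by
    have hsub : {x | c < g x} ⊆ ⋃ q ∈ Q, {x | (q : ℝ) < g x} := by
      intro x hx
      obtain ⟨y, ⟨q, hq, rfl⟩, hyx⟩ := exists_lt_of_csInf_lt (hQne.image _) (show c < g x from hx)
      exact mem_biUnion hq hyx
    exact measure_mono_null hsub
      ((measure_biUnion_null_iff Q.to_countable).2 fun q hq => hq)
  have h2 : μ {x | g x < c} = 0 := by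
    have hsub : {x | g x < c} ⊆ ⋃ q ∈ {q : ℚ | (q : ℝ) < c}, {x | g x < (q : ℝ)} := by
      intro x hx
      obtain ⟨q, hq1, hq2⟩ := exists_rat_btwn (show g x < c from hx)
      exact mem_biUnion (by exact hq2) hq1
    refine measure_mono_null hsub
      ((measure_biUnion_null_iff (to_countable _)).2 fun q hq => ?_)
    have hqQ : q ∉ Q := fun hqQ =>
      absurd (csInf_le hbdd (mem_image_of_mem _ hqQ)) (not_le.2 hq)
    exact (hall q).resolve_right hqQ
  refine ae_iff.2 (measure_mono_null ?_ (measure_union_null h2 h1))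
  intro x hx
  rcases lt_or_gt_of_ne (show g x ≠ c from hx) with h | h
  · exact Or.inl h
  · exact Or.inr h


/-- Two sets of positive Lebesgue measure admit a translate with positive-measure overlap. -/
lemma exists_translate {E₁ E₂ : Set ℝ} (h₁ : MeasurableSet E₁) (h₂ : MeasurableSet E₂)
    (hμ₁ : volume E₁ ≠ 0) (hμ₂ : volume E₂ ≠ 0) :
    ∃ t : ℝ, volume (E₁ ∩ (fun x => x + t) ⁻¹' E₂) ≠ 0 := by
  -- density points
  have Hd : ∀ {E : Set ℝ}, MeasurableSet E → volume E ≠ 0 →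
      ∃ x ∈ E, Tendsto (fun r => volume (E ∩ closedBall x r) / volume (closedBall x r))
        (𝓝[>] 0) (𝓝 1) := by
    intro E hE hμE
    have H := Besicovitch.ae_tendsto_measure_inter_div_of_measurableSet volume hE
    have H' : ∀ᵐ x ∂volume.restrict E,
        Tendsto (fun r => volume (E ∩ closedBall x r) / volume (closedBall x r))
          (𝓝[>] 0) (𝓝 (E.indicator 1 x)) := ae_restrict_of_ae H
    have hmem : ∀ᵐ x ∂volume.restrict E, x ∈ E := ae_restrict_mem hE
    have hne : (volume.restrict E) ≠ 0 := by
      simpa [Measure.restrict_eq_zero] using hμE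
    haveI : NeBot (ae (volume.restrict E)) := ae_neBot.2 hne
    obtain ⟨x, hx1, hx2⟩ := (H'.and hmem).exists
    refine ⟨x, hx2, ?_⟩
    rwa [indicator_of_mem hx2, Pi.one_apply] at hx1
  obtain ⟨x₁, hx₁E, hx₁⟩ := Hd h₁ hμ₁
  obtain ⟨x₂, hx₂E, hx₂⟩ := Hd h₂ hμ₂
  set t := x₂ - x₁ with ht
  refine ⟨t, ?_⟩
  set θ : ℝ≥0∞ := ENNReal.ofReal (3/4) with hθ
  have hθ1 : θ < 1 := by rw [hθ, ENNReal.ofReal_lt_one]; norm_num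
  have k₁ := hx₁.eventually_const_lt hθ1
  have k₂ := hx₂.eventually_const_lt hθ1
  have k₃ : ∀ᶠ r in 𝓝[>] (0:ℝ), r ∈ Ioi (0:ℝ) := eventually_mem_nhdsWithin
  obtain ⟨r, hk₁, hk₂, hr0⟩ := (k₁.and (k₂.and k₃)).exists
  rw [mem_Ioi] at hr0
  have hball : ∀ x : ℝ, volume (closedBall x r) = ENNReal.ofReal (2 * r) := fun x =>
    Real.volume_closedBall x r
  have hU0 : volume (closedBall x₁ r) ≠ 0 := by
    rw [hball]; simp [ENNReal.ofReal_eq_zero]; linarith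
  have hUt : volume (closedBall x₁ r) ≠ ∞ := by rw [hball]; exact ENNReal.ofReal_ne_top
  -- strict lower bounds
  have m₁ : θ * volume (closedBall x₁ r) < volume (E₁ ∩ closedBall x₁ r) := by
    rw [← ENNReal.lt_div_iff_mul_lt (Or.inl hU0) (Or.inl hUt)]
    exact hk₁
  -- translate the second bound to a ball around x₁
  have hpre : (fun x => x + t) ⁻¹' (E₂ ∩ closedBall x₂ r)
      = (fun x => x + t) ⁻¹' E₂ ∩ closedBall x₁ r := by
    rw [preimage_inter]
    congr 1
    ext x
    simp only [mem_preimage, Metric.mem_closedBall, Real.dist_eq]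
    rw [show x + t - x₂ = x - x₁ by rw [ht]; ring]
  have htr : volume ((fun x => x + t) ⁻¹' E₂ ∩ closedBall x₁ r)
      = volume (E₂ ∩ closedBall x₂ r) := by
    rw [← hpre, measure_preimage_add_right]
  have m₂ : θ * volume (closedBall x₁ r) < volume ((fun x => x + t) ⁻¹' E₂ ∩ closedBall x₁ r) := by
    rw [htr, hball x₁, ← hball x₂, ← ENNReal.lt_div_iff_mul_lt
      (Or.inl (by rw [hball]; simp [ENNReal.ofReal_eq_zero]; linarith))
      (Or.inl (by rw [hball]; exact ENNReal.ofReal_ne_top))]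
    exact hk₂
  -- conclude
  intro h0
  set S₁ := E₁ ∩ closedBall x₁ r with hS₁
  set S₂ := (fun x => x + t) ⁻¹' E₂ ∩ closedBall x₁ r with hS₂
  have hS₂m : MeasurableSet S₂ := (h₂.preimage (measurable_add_const t)).inter measurableSet_closedBall
  have hinter : volume (S₁ ∩ S₂) = 0 := by
    refine measure_mono_null ?_ h0
    intro x hx
    exact ⟨hx.1.1, hx.2.1⟩
  have hkey := measure_union_add_inter (μ := (volume : Measure ℝ)) S₁ hS₂m
  rw [hinter, add_zero] at hkey
  have hle : volume (S₁ ∪ S₂) ≤ volume (closedBall x₁ r) :=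
    measure_mono (union_subset inter_subset_right inter_subset_right)
  have hsum : θ * volume (closedBall x₁ r) + θ * volume (closedBall x₁ r)
      < volume S₁ + volume S₂ := ENNReal.add_lt_add m₁ m₂
  have hgt : volume (closedBall x₁ r) < θ * volume (closedBall x₁ r) + θ * volume (closedBall x₁ r) := by
    rw [hball, ← ENNReal.ofReal_mul (by norm_num), ← ENNReal.ofReal_add (by positivity) (by positivity),
      ENNReal.ofReal_lt_ofReal_iff (by positivity)]
    nlinarith
  have : volume (closedBall x₁ r) < volume (closedBall x₁ r) :=
    lt_of_lt_of_le (lt_trans hgt (by rw [← hkey] at hsum; exact hsum)) hle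
  exact lt_irrefl _ this


variable {C : Set ℝ} {t : ℝ}

open Classical in
/-- The involution of `ℝ` swapping `C` with its translate `C + t` and fixing everything else. -/
noncomputable def swapFun (C : Set ℝ) (t : ℝ) (x : ℝ) : ℝ :=
  if x ∈ C then x + t else if x - t ∈ C then x - t else x

lemma swapFun_of_mem {x : ℝ} (hx : x ∈ C) : swapFun C t x = x + t := if_pos hx

lemma swapFun_of_mem' (hd : Disjoint C {x | x - t ∈ C}) {x : ℝ} (hx : x - t ∈ C) :
    swapFun C t x = x - t := by
  have hxC : x ∉ C := fun h => hd.le_bot ⟨h, hx⟩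
  rw [swapFun, if_neg hxC, if_pos hx]

lemma swapFun_of_not_mem {x : ℝ} (hx : x ∉ C) (hx' : x - t ∉ C) : swapFun C t x = x := by
  rw [swapFun, if_neg hx, if_neg hx']

lemma swapFun_involutive (hd : Disjoint C {x | x - t ∈ C}) :
    Function.Involutive (swapFun C t) := by
  intro x
  by_cases h1 : x ∈ C
  · rw [swapFun_of_mem h1, swapFun_of_mem' hd (by simpa using h1), add_sub_cancel_right]
  · by_cases h2 : x - t ∈ C
    · rw [swapFun_of_mem' hd h2, swapFun_of_mem h2, sub_add_cancel]
    · rw [swapFun_of_not_mem h1 h2, swapFun_of_not_mem h1 h2]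

lemma swapFun_measurable (hC : MeasurableSet C) : Measurable (swapFun C t) := by
  unfold swapFun
  exact Measurable.ite hC (measurable_add_const t)
    (Measurable.ite (hC.preimage (measurable_sub_const t)) (measurable_sub_const t)
      measurable_id)

lemma swapFun_measurePreserving (hC : MeasurableSet C) (hd : Disjoint C {x | x - t ∈ C}) :
    MeasurePreserving (swapFun C t) volume volume := by
  have hC2 : MeasurableSet {x : ℝ | x - t ∈ C} := hC.preimage (measurable_sub_const t)
  refine ⟨swapFun_measurable hC, ?_⟩
  ext S hS
  rw [Measure.map_apply (swapFun_measurable hC) hS]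
  set C2 : Set ℝ := {x | x - t ∈ C} with hC2def
  have hpre : swapFun C t ⁻¹' S =
      ((fun x => x + t) ⁻¹' S ∩ C) ∪ (((fun x => x - t) ⁻¹' S ∩ C2) ∪ (S ∩ (C ∪ C2)ᶜ)) := by
    ext x
    by_cases h1 : x ∈ C
    · have h2 : x ∉ C2 := fun h => hd.le_bot ⟨h1, h⟩
      simp [mem_preimage, swapFun_of_mem h1, h1, h2, hC2def, show x - t ∉ C from h2]
    · by_cases h2 : x - t ∈ C
      · simp [mem_preimage, swapFun_of_mem' hd h2, h1, h2, hC2def]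
      · simp [mem_preimage, swapFun_of_not_mem h1 h2, h1, h2, hC2def]
  rw [hpre]
  have hd12 : Disjoint ((fun x => x + t) ⁻¹' S ∩ C)
      (((fun x => x - t) ⁻¹' S ∩ C2) ∪ (S ∩ (C ∪ C2)ᶜ)) := by
    refine Disjoint.union_right ?_ ?_
    · exact (hd.mono inter_subset_right inter_subset_right)
    · refine Set.disjoint_left.2 fun x hx hx' => hx'.2 (Or.inl hx.2)
  have hd23 : Disjoint ((fun x => x - t) ⁻¹' S ∩ C2) (S ∩ (C ∪ C2)ᶜ) :=
    Set.disjoint_left.2 fun x hx hx' => hx'.2 (Or.inr hx.2)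
  rw [measure_union hd12 (((hS.preimage (measurable_sub_const t)).inter hC2).union
    (hS.inter (hC.union hC2).compl)),
    measure_union hd23 (hS.inter (hC.union hC2).compl)]
  -- identify the first two pieces with translates
  have he1 : (fun x => x + t) ⁻¹' S ∩ C = (fun x => x + t) ⁻¹' (S ∩ C2) := by
    rw [preimage_inter]
    congr 1
    ext x; simp [hC2def]
  have he2 : (fun x => x - t) ⁻¹' S ∩ C2 = (fun x => x - t) ⁻¹' (S ∩ C) := by
    rw [preimage_inter]; rfl
  have hv1 : volume ((fun x => x + t) ⁻¹' S ∩ C) = volume (S ∩ C2) := by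
    rw [he1, measure_preimage_add_right]
  have hv2 : volume ((fun x => x - t) ⁻¹' S ∩ C2) = volume (S ∩ C) := by
    rw [he2]
    have : (fun x : ℝ => x - t) = fun x : ℝ => x + (-t) := by funext x; ring
    rw [this, measure_preimage_add_right]
  have hdSC : Disjoint (S ∩ C) (S ∩ C2) := hd.mono inter_subset_right inter_subset_right
  rw [hv1, hv2, ← add_assoc, add_comm (volume (S ∩ C2)) (volume (S ∩ C)),
    ← measure_union hdSC (hS.inter hC2),
    show (S ∩ C) ∪ (S ∩ C2) = S ∩ (C ∪ C2) by rw [inter_union_distrib_left],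
    show S ∩ (C ∪ C2)ᶜ = S \ (C ∪ C2) by rw [diff_eq],
    measure_inter_add_diff S (hC.union hC2)]


variable {φ : ℝ → ℝ}

/-- Lift of a self-map of `[0,1] ⊆ ℝ` to the subtype `unitInterval`. -/
def subLift (φ : ℝ → ℝ) (hmaps : MapsTo φ (Icc (0:ℝ) 1) (Icc (0:ℝ) 1)) :
    unitInterval → unitInterval :=
  fun x => ⟨φ x.1, hmaps x.2⟩

lemma subLift_involutive (hmaps : MapsTo φ (Icc (0:ℝ) 1) (Icc (0:ℝ) 1))
    (hinv : Function.Involutive φ) : Function.Involutive (subLift φ hmaps) := fun x =>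
  Subtype.ext (hinv x.1)

lemma subLift_measurable (hmaps : MapsTo φ (Icc (0:ℝ) 1) (Icc (0:ℝ) 1))
    (hφ : Measurable φ) : Measurable (subLift φ hmaps) :=
  Measurable.subtype_mk (hφ.comp measurable_subtype_coe)

lemma subLift_measurePreserving (hmaps : MapsTo φ (Icc (0:ℝ) 1) (Icc (0:ℝ) 1))
    (hφ : Measurable φ) (hinv : Function.Involutive φ)
    (hmp : MeasurePreserving φ volume volume) :
    MeasurePreserving (subLift φ hmaps) (volume : Measure unitInterval)
      (volume : Measure unitInterval) := by
  have hval : Measurable (Subtype.val : unitInterval → ℝ) := measurable_subtype_coe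
  have hψ : Measurable (subLift φ hmaps) := subLift_measurable hmaps hφ
  have hemb : MeasurableEmbedding (Subtype.val : unitInterval → ℝ) :=
    MeasurableEmbedding.subtype_coe (measurableSet_Icc : MeasurableSet (Icc (0:ℝ) 1))
  have hIinv : φ ⁻¹' (Icc (0:ℝ) 1) = Icc (0:ℝ) 1 := by
    ext x
    constructor
    · intro hx
      have := hmaps hx
      rwa [hinv x] at this
    · exact fun hx => hmaps hx
  -- the measurable equiv on ℝ
  let e : ℝ ≃ᵐ ℝ := ⟨hinv.toPerm φ, hφ, hφ⟩
  have hcoe : ⇑e = φ := rfl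
  have hcoes : ⇑e.symm = φ := rfl
  have hrestr : Measure.map φ (volume.restrict (Icc (0:ℝ) 1)) = volume.restrict (Icc (0:ℝ) 1) := by
    have h := e.restrict_map volume (Icc (0:ℝ) 1)
    rw [hcoe, hmp.map_eq, hIinv] at h
    exact h.symm
  have hmapval : Measure.map (Subtype.val : unitInterval → ℝ) (volume : Measure unitInterval)
      = volume.restrict (Icc (0:ℝ) 1) := by
    rw [unitInterval.volume_def, hemb.map_comap, Subtype.range_coe]
  have key : Measure.map (Subtype.val : unitInterval → ℝ)
        (Measure.map (subLift φ hmaps) (volume : Measure unitInterval))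
      = Measure.map (Subtype.val : unitInterval → ℝ) (volume : Measure unitInterval) := by
    rw [Measure.map_map hval hψ]
    have hcomp : (Subtype.val : unitInterval → ℝ) ∘ subLift φ hmaps
        = φ ∘ (Subtype.val : unitInterval → ℝ) := rfl
    rw [hcomp, ← Measure.map_map hφ hval, hmapval, hrestr]
  refine ⟨hψ, ?_⟩
  have h2 := congrArg (Measure.comap (Subtype.val : unitInterval → ℝ)) key
  rwa [hemb.comap_map, hemb.comap_map] at h2

variable (p : ℝ≥0∞) [Fact (1 ≤ p)]

omit [Fact (1 ≤ p)] in
lemma comp_comp {ψ : unitInterval → unitInterval}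
    (hmp : MeasurePreserving ψ (volume : Measure unitInterval) volume)
    (hinv : Function.Involutive ψ) (g : Lp ℝ p (volume : Measure unitInterval)) :
    Lp.compMeasurePreserving ψ hmp (Lp.compMeasurePreserving ψ hmp g) = g := by
  apply Lp.ext
  have h1 := Lp.coeFn_compMeasurePreserving (Lp.compMeasurePreserving ψ hmp g) hmp
  have h2 := Lp.coeFn_compMeasurePreserving g hmp
  have h3 : (⇑(Lp.compMeasurePreserving ψ hmp g)) ∘ ψ
      =ᵐ[(volume : Measure unitInterval)] (⇑g ∘ ψ) ∘ ψ := by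
    apply ae_eq_comp hmp.measurable.aemeasurable
    rwa [hmp.map_eq]
  refine h1.trans (h3.trans ?_)
  have : (⇑g ∘ ψ) ∘ ψ = ⇑g := by
    funext x; simp only [Function.comp_apply, hinv x]
  rw [this]

/-- The linear isometry equivalence of `Lp` induced by a measure-preserving involution. -/
noncomputable def invLIE {ψ : unitInterval → unitInterval}
    (hmp : MeasurePreserving ψ (volume : Measure unitInterval) volume)
    (hinv : Function.Involutive ψ) :
    Lp ℝ p (volume : Measure unitInterval) ≃ₗᵢ[ℝ] Lp ℝ p (volume : Measure unitInterval) where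
  toLinearEquiv :=
    { Lp.compMeasurePreservingₗ ℝ ψ hmp with
      invFun := Lp.compMeasurePreserving ψ hmp
      left_inv := comp_comp p hmp hinv
      right_inv := comp_comp p hmp hinv }
  norm_map' := fun g => Lp.norm_compMeasurePreserving g hmp

lemma invLIE_apply {ψ : unitInterval → unitInterval}
    (hmp : MeasurePreserving ψ (volume : Measure unitInterval) volume)
    (hinv : Function.Involutive ψ) (g : Lp ℝ p (volume : Measure unitInterval)) :
    invLIE p hmp hinv g = Lp.compMeasurePreserving ψ hmp g := rfl

lemma invLIE_indicator {ψ : unitInterval → unitInterval}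
    (hmp : MeasurePreserving ψ (volume : Measure unitInterval) volume)
    (hinv : Function.Involutive ψ) {s : Set unitInterval} (hs : MeasurableSet s)
    (hμs : (volume : Measure unitInterval) s ≠ ⊤) (hpre : ψ ⁻¹' s = s) :
    invLIE p hmp hinv (indicatorConstLp p hs hμs (1:ℝ)) = indicatorConstLp p hs hμs (1:ℝ) := by
  rw [invLIE_apply, Lp.indicatorConstLp_compMeasurePreserving]
  apply Lp.ext
  refine (indicatorConstLp_coeFn).trans (EventuallyEq.trans ?_ (indicatorConstLp_coeFn).symm)
  apply Filter.EventuallyEq.of_eq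
  rw [hpre]

end EnvAux


namespace EnvAux

lemma coeFn_sum_indicator (p : ℝ≥0∞) [Fact (1 ≤ p)] (n : ℕ) (A : Fin n → Set unitInterval)
    (hA : ∀ i, MeasurableSet (A i)) (hfin : ∀ i, (volume : Measure unitInterval) (A i) ≠ ⊤)
    (c : Fin n → ℝ) (s : Finset (Fin n)) :
    ⇑(∑ i ∈ s, c i • indicatorConstLp p (hA i) (hfin i) (1:ℝ))
      =ᵐ[(volume : Measure unitInterval)]
      fun x => ∑ i ∈ s, c i * (A i).indicator (fun _ => (1:ℝ)) x := by
  classical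
  induction s using Finset.induction_on with
  | empty =>
      simp only [Finset.sum_empty]
      exact Lp.coeFn_zero ℝ p _
  | @insert j s hj ih =>
      rw [Finset.sum_insert hj]
      refine (Lp.coeFn_add _ _).trans ?_
      have h1 : ⇑(c j • indicatorConstLp p (hA j) (hfin j) (1:ℝ))
          =ᵐ[(volume : Measure unitInterval)]
          fun x => c j * (A j).indicator (fun _ => (1:ℝ)) x := by
        refine (Lp.coeFn_smul _ _).trans ?_
        filter_upwards [indicatorConstLp_coeFn (p := p) (hs := hA j) (hμs := hfin j) (c := (1:ℝ))]
          with x hx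
        simp [hx]
      filter_upwards [h1, ih] with x hx1 hx2
      simp only [Pi.add_apply, hx1, hx2, Finset.sum_insert hj]

end EnvAux


/-- Let `1 ≤ p < ∞`, `p ≠ 2`, and let `Y ⊆ L_p[0,1]` be the span of the
indicator functions of a finite measurable partition of `[0,1]` (a finite-dimensional
unital sublattice). Then the algebraic envelope of `Y` with respect to the isometry
group equals `Y`: an element of `L_p` fixed by every surjective linear isometry fixing
`Y` pointwise lies in `Y`. -/
theorem algebraic_envelope_of_finite_unital_sublattice
    (p : ℝ≥0∞) [Fact (1 ≤ p)] (hp_top : p ≠ ⊤) (hp2 : p ≠ 2)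
    (n : ℕ) (A : Fin n → Set unitInterval)
    (hA : ∀ i, MeasurableSet (A i))
    (hfin : ∀ i, (volume : Measure unitInterval) (A i) ≠ ⊤)
    (hdisj : ∀ i j, i ≠ j → A i ∩ A j = ∅)
    (hcover : (⋃ i, A i) = Set.univ) :
    {f : Lp ℝ p (volume : Measure unitInterval) |
        ∀ T : Lp ℝ p (volume : Measure unitInterval) ≃ₗᵢ[ℝ]
              Lp ℝ p (volume : Measure unitInterval),
          (∀ y ∈ Submodule.span ℝ
              (Set.range fun i => indicatorConstLp p (hA i) (hfin i) (1:ℝ)), T y = y) →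
          T f = f}
      = (Submodule.span ℝ
          (Set.range fun i => indicatorConstLp p (hA i) (hfin i) (1:ℝ)) : Set _) := by
  ext f
  simp only [Set.mem_setOf_eq, SetLike.mem_coe]
  constructor
  · intro hf
    classical
    have hemb : MeasurableEmbedding (Subtype.val : unitInterval → ℝ) :=
      MeasurableEmbedding.subtype_coe (measurableSet_Icc : MeasurableSet (Set.Icc (0:ℝ) 1))
    have hfae := Lp.aestronglyMeasurable f
    set g : unitInterval → ℝ := hfae.mk f with hgdef
    have hgm : Measurable g := hfae.stronglyMeasurable_mk.measurable
    have hfg : ⇑f =ᵐ[(volume : Measure unitInterval)] g := hfae.ae_eq_mk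
    have key : ∀ i, ∃ c : ℝ, ∀ᵐ x ∂(volume : Measure unitInterval).restrict (A i), g x = c := by
      intro i
      rcases EnvAux.ae_const_or_levels ((volume : Measure unitInterval).restrict (A i)) g with h | ⟨c, hc1, hc2⟩
      · exact h
      exfalso
      have hlt : MeasurableSet {x : unitInterval | g x < c} :=
        measurableSet_lt hgm measurable_const
      have hgt : MeasurableSet {x : unitInterval | c < g x} :=
        measurableSet_lt measurable_const hgm
      rw [Measure.restrict_apply hlt] at hc1
      rw [Measure.restrict_apply hgt] at hc2
      set B₁ : Set unitInterval := {x | g x < c} ∩ A i with hB₁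
      set B₂ : Set unitInterval := {x | c < g x} ∩ A i with hB₂
      have hmB₁ : MeasurableSet B₁ := hlt.inter (hA i)
      have hmB₂ : MeasurableSet B₂ := hgt.inter (hA i)
      set E₁ : Set ℝ := Subtype.val '' B₁ with hE₁
      set E₂ : Set ℝ := Subtype.val '' B₂ with hE₂
      have hmE₁ : MeasurableSet E₁ := hemb.measurableSet_image' hmB₁
      have hmE₂ : MeasurableSet E₂ := hemb.measurableSet_image' hmB₂
      have hvol₁ : volume E₁ ≠ 0 := by
        rw [hE₁, volume_image_subtype_coe measurableSet_Icc]; exact hc1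
      have hvol₂ : volume E₂ ≠ 0 := by
        rw [hE₂, volume_image_subtype_coe measurableSet_Icc]; exact hc2
      obtain ⟨t, ht⟩ := EnvAux.exists_translate hmE₁ hmE₂ hvol₁ hvol₂
      set C : Set ℝ := E₁ ∩ (fun x => x + t) ⁻¹' E₂ with hC
      have hmC : MeasurableSet C := hmE₁.inter (hmE₂.preimage (measurable_add_const t))
      set C2 : Set ℝ := {x | x - t ∈ C} with hC2
      have hC2subE₂ : C2 ⊆ E₂ := by
        intro x hx
        have h2 := (hx : x - t ∈ C).2
        simpa using h2
      have hCsubE₁ : C ⊆ E₁ := Set.inter_subset_left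
      have hE₁E₂ : E₁ ∩ E₂ = ∅ := by
        rw [hE₁, hE₂, ← Set.image_inter Subtype.coe_injective]
        have hBB : B₁ ∩ B₂ = ∅ :=
          Set.eq_empty_iff_forall_notMem.2 fun x hx =>
            lt_asymm (show g x < c from hx.1.1) (show c < g x from hx.2.1)
        rw [hBB, Set.image_empty]
      have hd : Disjoint C C2 := by
        rw [Set.disjoint_iff_inter_eq_empty]
        refine Set.eq_empty_of_subset_empty fun x hx => ?_
        rw [← hE₁E₂]
        exact ⟨hCsubE₁ hx.1, hC2subE₂ hx.2⟩
      have hIsub₁ : E₁ ⊆ Set.Icc (0:ℝ) 1 := by rintro x ⟨b, -, rfl⟩; exact b.2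
      have hIsub₂ : E₂ ⊆ Set.Icc (0:ℝ) 1 := by rintro x ⟨b, -, rfl⟩; exact b.2
      have hmaps : Set.MapsTo (EnvAux.swapFun C t) (Set.Icc (0:ℝ) 1) (Set.Icc (0:ℝ) 1) := by
        intro x hx
        by_cases h1 : x ∈ C
        · rw [EnvAux.swapFun_of_mem h1]
          exact hIsub₂ (hC2subE₂ (show x + t - t ∈ C by simpa using h1))
        · by_cases h2 : x - t ∈ C
          · rw [EnvAux.swapFun_of_mem' hd h2]; exact hIsub₁ (hCsubE₁ h2)
          · rw [EnvAux.swapFun_of_not_mem h1 h2]; exact hx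
      set ψ : unitInterval → unitInterval := EnvAux.subLift (EnvAux.swapFun C t) hmaps with hψ
      have hψmp : MeasurePreserving ψ (volume : Measure unitInterval) (volume : Measure unitInterval) :=
        EnvAux.subLift_measurePreserving hmaps (EnvAux.swapFun_measurable hmC)
          (EnvAux.swapFun_involutive hd) (EnvAux.swapFun_measurePreserving hmC hd)
      have hψinv : Function.Involutive ψ :=
        EnvAux.subLift_involutive hmaps (EnvAux.swapFun_involutive hd)
      set T := EnvAux.invLIE p hψmp hψinv with hTdef
      have hCC2subAi : C ∪ C2 ⊆ Subtype.val '' (A i) := by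
        rintro x (hx | hx)
        · obtain ⟨b, hb, rfl⟩ := hCsubE₁ hx
          exact ⟨b, hb.2, rfl⟩
        · obtain ⟨b, hb, rfl⟩ := hC2subE₂ hx
          exact ⟨b, hb.2, rfl⟩
      have hgen : ∀ j, ψ ⁻¹' (A j) = A j := by
        intro j
        have hmemiff : ∀ v ∈ Set.Icc (0:ℝ) 1,
            (EnvAux.swapFun C t v ∈ Subtype.val '' A j ↔ v ∈ Subtype.val '' A j) := by
          rcases eq_or_ne j i with rfl | hji
          · intro v hv
            by_cases h1 : v ∈ C
            · rw [EnvAux.swapFun_of_mem h1]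
              exact iff_of_true (hCC2subAi (Or.inr (show v + t - t ∈ C by simpa using h1)))
                (hCC2subAi (Or.inl h1))
            · by_cases h2 : v - t ∈ C
              · rw [EnvAux.swapFun_of_mem' hd h2]
                exact iff_of_true (hCC2subAi (Or.inl h2)) (hCC2subAi (Or.inr h2))
              · rw [EnvAux.swapFun_of_not_mem h1 h2]
          · have hdisjAij : Subtype.val '' A j ∩ Subtype.val '' A i = ∅ := by
              rw [← Set.image_inter Subtype.coe_injective, hdisj j i hji, Set.image_empty]
            have hnot : ∀ {y : ℝ}, y ∈ C ∪ C2 → y ∉ Subtype.val '' A j := by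
              intro y hy hyA
              have : y ∈ Subtype.val '' A j ∩ Subtype.val '' A i := ⟨hyA, hCC2subAi hy⟩
              rw [hdisjAij] at this
              exact this
            intro v hv
            by_cases h1 : v ∈ C
            · rw [EnvAux.swapFun_of_mem h1]
              exact iff_of_false (hnot (Or.inr (show v + t - t ∈ C by simpa using h1)))
                (hnot (Or.inl h1))
            · by_cases h2 : v - t ∈ C
              · rw [EnvAux.swapFun_of_mem' hd h2]
                exact iff_of_false (hnot (Or.inl h2)) (hnot (Or.inr h2))
              · rw [EnvAux.swapFun_of_not_mem h1 h2]
        ext x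
        simp only [Set.mem_preimage]
        have h1 : ψ x ∈ A j ↔ ((ψ x : ℝ) ∈ Subtype.val '' A j) :=
          (Subtype.coe_injective.mem_set_image).symm
        have h2 : x ∈ A j ↔ ((x : ℝ) ∈ Subtype.val '' A j) :=
          (Subtype.coe_injective.mem_set_image).symm
        rw [h1, h2, show ((ψ x : ℝ)) = EnvAux.swapFun C t (x : ℝ) from rfl]
        exact hmemiff (x : ℝ) x.2
      have hfixspan : ∀ y ∈ Submodule.span ℝ
          (Set.range fun i => indicatorConstLp p (hA i) (hfin i) (1:ℝ)), T y = y := by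
        intro y hy
        induction hy using Submodule.span_induction with
        | mem x hx =>
            obtain ⟨j, rfl⟩ := hx
            exact EnvAux.invLIE_indicator p hψmp hψinv (hA j) (hfin j) (hgen j)
        | zero => exact map_zero T
        | add a b _ _ ha hb => rw [map_add, ha, hb]
        | smul r a _ ha => rw [_root_.map_smul, ha]
      have hTf : T f = f := hf T hfixspan
      have h1 : ⇑(T f) =ᵐ[(volume : Measure unitInterval)] ⇑f ∘ ψ := Lp.coeFn_compMeasurePreserving f hψmp
      rw [hTf] at h1
      have h2 : ⇑f ∘ ψ =ᵐ[(volume : Measure unitInterval)] g ∘ ψ := by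
        apply ae_eq_comp hψmp.measurable.aemeasurable
        rw [hψmp.map_eq]
        exact hfg
      have hgg : (g ∘ ψ) =ᵐ[(volume : Measure unitInterval)] g := (h2.symm.trans h1.symm).trans hfg
      set C' : Set unitInterval := Subtype.val ⁻¹' C with hC'
      have hμC' : (volume : Measure unitInterval) C' ≠ 0 := by
        rw [hC', volume_preimage_coe measurableSet_Icc.nullMeasurableSet hmC,
          Set.inter_eq_self_of_subset_left (hCsubE₁.trans hIsub₁)]
        exact ht
      have hbad : C' ⊆ {x : unitInterval | ¬ (g ∘ ψ) x = g x} := by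
        intro x hx
        have hx1 : x ∈ B₁ := by
          have hxE : (x : ℝ) ∈ E₁ := hCsubE₁ hx
          rwa [hE₁, Subtype.coe_injective.mem_set_image] at hxE
        have hψx : ψ x ∈ B₂ := by
          have hval : ((ψ x : ℝ)) = (x : ℝ) + t := EnvAux.swapFun_of_mem hx
          have hmem : ((ψ x : ℝ)) ∈ E₂ := by
            rw [hval]
            exact hC2subE₂ (show (x : ℝ) + t - t ∈ C by rw [add_sub_cancel_right]; exact hx)
          rwa [hE₂, Subtype.coe_injective.mem_set_image] at hmem
        have hlt1 : g x < c := hx1.1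
        have hlt2 : c < g (ψ x) := hψx.1
        simp only [Set.mem_setOf_eq, Function.comp_apply]
        intro hEq
        rw [hEq] at hlt2
        exact lt_asymm hlt1 hlt2
      exact hμC' (measure_mono_null hbad (ae_iff.1 hgg))
    choose c hc using key
    set F0 := ∑ i, c i • indicatorConstLp p (hA i) (hfin i) (1:ℝ) with hF0
    have hmem : F0 ∈ Submodule.span ℝ
        (Set.range fun i => indicatorConstLp p (hA i) (hfin i) (1:ℝ)) :=
      Submodule.sum_mem _ fun i _ =>
        Submodule.smul_mem _ _ (Submodule.subset_span ⟨i, rfl⟩)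
    have hsum := EnvAux.coeFn_sum_indicator p n A hA hfin c Finset.univ
    have hae : ∀ᵐ x ∂(volume : Measure unitInterval), ∀ i, x ∈ A i → g x = c i :=
      ae_all_iff.2 fun i => (ae_restrict_iff' (hA i)).1 (hc i)
    have hfF0 : ⇑f =ᵐ[(volume : Measure unitInterval)] ⇑F0 := by
      refine hfg.trans (Filter.EventuallyEq.trans ?_ hsum.symm)
      filter_upwards [hae] with x hx
      obtain ⟨i, hi⟩ : ∃ i, x ∈ A i := by
        have hx' : x ∈ ⋃ i, A i := hcover ▸ Set.mem_univ x
        exact Set.mem_iUnion.1 hx'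
      rw [Finset.sum_eq_single i]
      · rw [Set.indicator_of_mem hi, mul_one]; exact hx i hi
      · intro j _ hji
        rw [Set.indicator_of_notMem, mul_zero]
        intro hj
        have hxx : x ∈ A j ∩ A i := ⟨hj, hi⟩
        rw [hdisj j i hji] at hxx
        exact hxx
      · intro h; exact absurd (Finset.mem_univ i) h
    rw [show f = F0 from Lp.ext hfF0]
    exact hmem
  · intro hf T hT
    exact hT f hf
end

section
/- Let Y be a closed unital subspace of L_1[0,1] (containing the constant function 1). Then the absolute value |f| of every f ∈ Y belongs to the isometric envelope Env(Y) of Y in L_1; consequently the closed sublattice generated by Y is contained in Env(Y). -/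
open MeasureTheory Filter
open scoped ENNReal

/-- `x` belongs to the isometric envelope of `Y` in `X` (sequential form, as used in
`L_1`): every sequence of surjective linear isometries of `X` converging pointwise on
`Y` to the identity converges at `x` to `x`. -/
def MemEnvSeq {X : Type*} [NormedAddCommGroup X] [NormedSpace ℝ X]
    (Y : Set X) (x : X) : Prop :=
  ∀ T : ℕ → (X ≃ₗᵢ[ℝ] X),
    (∀ y ∈ Y, Tendsto (fun n => T n y) atTop (nhds y)) →
    Tendsto (fun n => T n x) atTop (nhds x)

namespace AbsEnvAux

noncomputable section


local notation "μᵤ" => (volume : Measure unitInterval)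
abbrev XX := Lp ℝ 1 (volume : Measure unitInterval)

lemma norm_eq (u : XX) : ‖u‖ = ∫ x, |u x| ∂μᵤ := by
  rw [MeasureTheory.L1.norm_eq_integral_norm]
  simp [Real.norm_eq_abs]

lemma integ (u : XX) : Integrable (⇑u) μᵤ :=
  MeasureTheory.L1.integrable_coeFn u

lemma r1 (x y : ℝ) : 2 * max (|x| - |y|) 0 = |x - y| + |x + y| - 2 * |y| := by
  rcases abs_cases x with ⟨h1, h2⟩ | ⟨h1, h2⟩ <;>
  rcases abs_cases y with ⟨h3, h4⟩ | ⟨h3, h4⟩ <;>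
  rcases abs_cases (x - y) with ⟨h5, h6⟩ | ⟨h5, h6⟩ <;>
  rcases abs_cases (x + y) with ⟨h7, h8⟩ | ⟨h7, h8⟩ <;>
  rcases max_cases (|x| - |y|) 0 with ⟨h9, h10⟩ | ⟨h9, h10⟩ <;>
  linarith

lemma r2 (x lam : ℝ) : |x| - x ≤ (|x| + lam - |x + lam|) + 2 * max (|x| - lam) 0 := by
  rcases abs_cases x with ⟨h1, h2⟩ | ⟨h1, h2⟩ <;>
  rcases abs_cases (x + lam) with ⟨h3, h4⟩ | ⟨h3, h4⟩ <;>
  rcases max_cases (|x| - lam) 0 with ⟨h5, h6⟩ | ⟨h5, h6⟩ <;>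
  linarith

lemma r3 (a b lam : ℝ) : max (a - lam) 0 ≤ max (b - lam) 0 + |a - b| := by
  rcases max_cases (a - lam) 0 with ⟨h1, h2⟩ | ⟨h1, h2⟩ <;>
  rcases max_cases (b - lam) 0 with ⟨h3, h4⟩ | ⟨h3, h4⟩ <;>
  rcases abs_cases (a - b) with ⟨h5, h6⟩ | ⟨h5, h6⟩ <;>
  linarith

lemma r4 (a c : ℝ) : |a - c| ≤ (|a| - a) + abs (|a| - c) := by
  rcases abs_cases a with ⟨h1, h2⟩ | ⟨h1, h2⟩ <;>
  rcases abs_cases (a - c) with ⟨h3, h4⟩ | ⟨h3, h4⟩ <;>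
  rcases abs_cases (abs a - c) with ⟨h5, h6⟩ | ⟨h5, h6⟩ <;>
  linarith

lemma key (f one : XX) (hone_ae : ⇑one =ᵐ[μᵤ] fun _ => (1:ℝ))
    (T : XX ≃ₗᵢ[ℝ] XX) (lam : ℝ) (hlam : 0 < lam) :
    ‖T |f| - |f|‖ ≤ lam * ‖T one - one‖
      + 2 * (∫ x, max (|f x| - lam) 0 ∂μᵤ) + 3 * ‖T f - f‖ := by
  have iF : Integrable (⇑f) μᵤ := integ f
  have iG : Integrable (⇑(T |f|)) μᵤ := integ _
  have iH : Integrable (⇑(T f)) μᵤ := integ _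
  -- basic norm identities
  have hFabs : ‖(|f| : XX)‖ = ∫ x, |f x| ∂μᵤ := by
    rw [norm_eq]
    refine integral_congr_ae ?_
    filter_upwards [Lp.coeFn_abs f] with x hx
    rw [hx, abs_abs]
  have hsub : ‖T |f| - T f‖ = ∫ x, (|f x| - f x) ∂μᵤ := by
    rw [← map_sub, T.norm_map, norm_eq]
    refine integral_congr_ae ?_
    filter_upwards [Lp.coeFn_sub (|f|) f, Lp.coeFn_abs f] with x hx h2
    rw [hx]; simp only [Pi.sub_apply]
    rw [h2]
    exact abs_of_nonneg (sub_nonneg.2 (le_abs_self _))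
  have hadd : ‖T |f| + T f‖ = ∫ x, (|f x| + f x) ∂μᵤ := by
    rw [← map_add, T.norm_map, norm_eq]
    refine integral_congr_ae ?_
    filter_upwards [Lp.coeFn_add (|f|) f, Lp.coeFn_abs f] with x hx h2
    rw [hx]; simp only [Pi.add_apply]
    rw [h2]
    exact abs_of_nonneg (by linarith [neg_abs_le (f x)])
  have hgsub : ‖T |f| - T f‖ = ∫ x, |(T |f|) x - (T f) x| ∂μᵤ := by
    rw [norm_eq]
    exact integral_congr_ae ((Lp.coeFn_sub _ _).fun_comp abs)
  have hgadd : ‖T |f| + T f‖ = ∫ x, |(T |f|) x + (T f) x| ∂μᵤ := by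
    rw [norm_eq]
    exact integral_congr_ae ((Lp.coeFn_add _ _).fun_comp abs)
  have hnG : ∫ x, |(T |f|) x| ∂μᵤ = ∫ x, |f x| ∂μᵤ := by
    rw [← norm_eq, T.norm_map, hFabs]
  have hnH : ∫ x, |(T f) x| ∂μᵤ = ∫ x, |f x| ∂μᵤ := by
    rw [← norm_eq, T.norm_map, norm_eq]
  -- a.e. equality of |G| and |H|
  have habs : (fun x => |(T |f|) x|) =ᵐ[μᵤ] fun x => |(T f) x| := by
    have iq : Integrable (fun x => max (|(T |f|) x| - |(T f) x|) 0) μᵤ :=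
      (iG.abs.sub iH.abs).pos_part
    have hq : ∫ x, max (|(T |f|) x| - |(T f) x|) 0 ∂μᵤ = 0 := by
      have h2 : ∫ x, 2 * max (|(T |f|) x| - |(T f) x|) 0 ∂μᵤ
          = ∫ x, (|(T |f|) x - (T f) x| + |(T |f|) x + (T f) x| - 2 * |(T f) x|) ∂μᵤ :=
        integral_congr_ae (Eventually.of_forall fun x => r1 _ _)
      rw [integral_const_mul] at h2
      have h3 := integral_sub (μ := μᵤ)
        (f := fun x => |(T |f|) x - (T f) x| + |(T |f|) x + (T f) x|)
        (g := fun x => 2 * |(T f) x|)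
        ((iG.sub iH).abs.add (iG.add iH).abs) (iH.abs.const_mul 2)
      have h4 := integral_add (μ := μᵤ)
        (f := fun x => |(T |f|) x - (T f) x|) (g := fun x => |(T |f|) x + (T f) x|)
        (iG.sub iH).abs (iG.add iH).abs
      rw [integral_const_mul] at h3
      have h5 : (∫ x, |(T |f|) x - (T f) x| ∂μᵤ) + (∫ x, |(T |f|) x + (T f) x| ∂μᵤ)
          = 2 * ∫ x, |f x| ∂μᵤ := by
        rw [← hgsub, ← hgadd, hsub, hadd,
          integral_sub iF.abs iF, integral_add iF.abs iF]
        ring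
      rw [h3, h4, h5, hnH] at h2
      linarith
    have hq0 : (fun x => max (|(T |f|) x| - |(T f) x|) 0) =ᵐ[μᵤ] 0 :=
      (integral_eq_zero_iff_of_nonneg (μ := μᵤ)
        (f := fun x => max (|(T |f|) x| - |(T f) x|) 0)
        (fun x => le_max_right _ _) iq).1 hq
    have hq'0 : (fun x => max (|(T f) x| - |(T |f|) x|) 0) =ᵐ[μᵤ] 0 := by
      have iq' : Integrable (fun x => max (|(T f) x| - |(T |f|) x|) 0) μᵤ :=
        (iH.abs.sub iG.abs).pos_part
      refine (integral_eq_zero_iff_of_nonneg (μ := μᵤ)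
        (f := fun x => max (|(T f) x| - |(T |f|) x|) 0)
        (fun x => le_max_right _ _) iq').1 ?_
      have hptw : ∀ x : ℝ, ∀ y : ℝ, max (y - x) 0 = max (x - y) 0 - (x - y) := by
        intro x y
        rcases max_cases (y - x) 0 with ⟨h1, h2⟩ | ⟨h1, h2⟩ <;>
        rcases max_cases (x - y) 0 with ⟨h3, h4⟩ | ⟨h3, h4⟩ <;> linarith
      have heq : ∫ x, max (|(T f) x| - |(T |f|) x|) 0 ∂μᵤ
          = ∫ x, (max (|(T |f|) x| - |(T f) x|) 0 - (|(T |f|) x| - |(T f) x|)) ∂μᵤ :=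
        integral_congr_ae (Eventually.of_forall fun x => hptw _ _)
      rw [heq, integral_sub (μ := μᵤ)
        (f := fun x => max (|(T |f|) x| - |(T f) x|) 0)
        (g := fun x => |(T |f|) x| - |(T f) x|) iq (iG.abs.sub iH.abs), hq,
        integral_sub iG.abs iH.abs, hnG, hnH]
      ring
    filter_upwards [hq0, hq'0] with x h1 h2
    simp only [Pi.zero_apply] at h1 h2
    have t1 : |(T |f|) x| - |(T f) x| ≤ 0 := by
      rw [← h1]; exact le_max_left _ _
    have t2 : |(T f) x| - |(T |f|) x| ≤ 0 := by
      rw [← h2]; exact le_max_left _ _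
    linarith
  -- main chain
  have e2 : ‖T f - f‖ = ∫ x, |(T f) x - f x| ∂μᵤ := by
    rw [norm_eq]; exact integral_congr_ae ((Lp.coeFn_sub _ _).fun_comp abs)
  have hmain : ‖T |f| - |f|‖ ≤ (∫ x, (|(T |f|) x| - (T |f|) x) ∂μᵤ) + ‖T f - f‖ := by
    have e1 : ‖T |f| - |f|‖ = ∫ x, abs ((T |f|) x - |f x|) ∂μᵤ := by
      rw [norm_eq]
      refine integral_congr_ae ?_
      filter_upwards [Lp.coeFn_sub (T |f|) (|f|), Lp.coeFn_abs f] with x hx h2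
      rw [hx]; simp only [Pi.sub_apply]; rw [h2]
    rw [e1, e2, ← integral_add (μ := μᵤ)
      (f := fun x => |(T |f|) x| - (T |f|) x) (g := fun x => |(T f) x - f x|)
      (iG.abs.sub iG) (iH.sub iF).abs]
    refine integral_mono_ae (iG.sub iF.abs).abs ((iG.abs.sub iG).add (iH.sub iF).abs) ?_
    filter_upwards [habs] with x hx
    have t1 : abs ((T |f|) x - |f x|) ≤ (|(T |f|) x| - (T |f|) x) + abs (|(T |f|) x| - |f x|) :=
      r4 _ _
    have t2 : abs (|(T f) x| - |f x|) ≤ |(T f) x - f x| := abs_abs_sub_abs_le_abs_sub _ _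
    rw [hx] at t1
    exact t1.trans (by linarith)
  -- bound on the defect integral
  have hA : (∫ x, (|(T |f|) x| - (T |f|) x) ∂μᵤ)
      ≤ lam * ‖T one - one‖ + 2 * ∫ x, max (|(T f) x| - lam) 0 ∂μᵤ := by
    -- step i
    have s1 : (∫ x, (|(T |f|) x| - (T |f|) x) ∂μᵤ)
        ≤ (∫ x, (|(T |f|) x| + lam - |(T |f|) x + lam|) ∂μᵤ)
          + 2 * ∫ x, max (|(T |f|) x| - lam) 0 ∂μᵤ := by
      rw [← integral_const_mul, ← integral_add (μ := μᵤ)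
        (f := fun x => |(T |f|) x| + lam - |(T |f|) x + lam|)
        (g := fun x => 2 * max (|(T |f|) x| - lam) 0)
        ((iG.abs.add (integrable_const lam)).sub (iG.add (integrable_const lam)).abs)
        ((iG.abs.sub (integrable_const lam)).pos_part.const_mul 2)]
      exact integral_mono_ae (iG.abs.sub iG)
        (((iG.abs.add (integrable_const lam)).sub (iG.add (integrable_const lam)).abs).add
          ((iG.abs.sub (integrable_const lam)).pos_part.const_mul 2))
        (Eventually.of_forall fun x => r2 _ _)
    -- step ii
    have m1 : ∫ x, |(T |f|) x + lam| ∂μᵤ = ‖T |f| + lam • one‖ := by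
      rw [norm_eq]
      refine integral_congr_ae ?_
      filter_upwards [Lp.coeFn_add (T |f|) (lam • one), Lp.coeFn_smul lam one, hone_ae]
        with x hx h2 h3
      rw [hx]; simp only [Pi.add_apply]
      rw [h2]; simp only [Pi.smul_apply, smul_eq_mul]
      rw [h3, mul_one]
    have m2 : ‖T |f| + lam • (T one)‖ = (∫ x, |f x| ∂μᵤ) + lam := by
      rw [← _root_.map_smul, ← map_add, T.norm_map, norm_eq]
      have : ∫ x, |(|f| + lam • one : XX) x| ∂μᵤ = ∫ x, (|f x| + lam) ∂μᵤ := by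
        refine integral_congr_ae ?_
        filter_upwards [Lp.coeFn_add (|f| : XX) (lam • one), Lp.coeFn_smul lam one,
          hone_ae, Lp.coeFn_abs f] with x hx h2 h3 h4
        rw [hx]; simp only [Pi.add_apply]
        rw [h2]; simp only [Pi.smul_apply, smul_eq_mul]
        rw [h3, mul_one, h4]
        exact abs_of_nonneg (by positivity)
      rw [this, integral_add iF.abs (integrable_const lam)]
      simp [measure_univ]
    have m3 : ‖T |f| + lam • (T one)‖ ≤ ‖T |f| + lam • one‖ + lam * ‖T one - one‖ := by
      have hdec : T |f| + lam • (T one) = (T |f| + lam • one) + lam • (T one - one) := by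
        rw [smul_sub]; abel
      rw [hdec]
      refine (norm_add_le _ _).trans ?_
      rw [norm_smul, Real.norm_eq_abs, abs_of_pos hlam]
    have s2 : (∫ x, (|(T |f|) x| + lam - |(T |f|) x + lam|) ∂μᵤ) ≤ lam * ‖T one - one‖ := by
      have q1 : ∫ x, (|(T |f|) x| + lam - |(T |f|) x + lam|) ∂μᵤ
          = ((∫ x, |(T |f|) x| ∂μᵤ) + lam) - ∫ x, |(T |f|) x + lam| ∂μᵤ := by
        rw [integral_sub (μ := μᵤ)
          (f := fun x => |(T |f|) x| + lam) (g := fun x => |(T |f|) x + lam|)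
          (iG.abs.add (integrable_const lam)) (iG.add (integrable_const lam)).abs,
          integral_add iG.abs (integrable_const lam)]
        simp [measure_univ]
      rw [q1, hnG, m1]
      linarith [m2 ▸ m3]
    -- step iii
    have s3 : ∫ x, max (|(T |f|) x| - lam) 0 ∂μᵤ = ∫ x, max (|(T f) x| - lam) 0 ∂μᵤ := by
      refine integral_congr_ae ?_
      filter_upwards [habs] with x hx
      rw [hx]
    linarith [s1, s2, s3]
  -- final comparison with f
  have hB : ∫ x, max (|(T f) x| - lam) 0 ∂μᵤ
      ≤ (∫ x, max (|f x| - lam) 0 ∂μᵤ) + ‖T f - f‖ := by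
    rw [e2, ← integral_add (μ := μᵤ)
      (f := fun x => max (|f x| - lam) 0) (g := fun x => |(T f) x - f x|)
      (iF.abs.sub (integrable_const lam)).pos_part (iH.sub iF).abs]
    exact integral_mono_ae (iH.abs.sub (integrable_const lam)).pos_part
      ((iF.abs.sub (integrable_const lam)).pos_part.add (iH.sub iF).abs)
      (Eventually.of_forall fun x => (r3 (|(T f) x|) (|f x|) lam).trans
        (add_le_add_right (abs_abs_sub_abs_le_abs_sub _ _) _))
  linarith

lemma tendsto_trunc (f : XX) :
    Tendsto (fun k : ℕ => ∫ x, max (|f x| - k) 0 ∂μᵤ) atTop (nhds 0) := by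
  have iF := (integ f).abs
  have h := tendsto_integral_of_dominated_convergence (μ := μᵤ)
    (F := fun k : ℕ => fun x => max (|f x| - (k:ℝ)) 0) (f := fun _ => (0:ℝ))
    (bound := fun x => |f x|)
    (fun k => ((iF.sub (integrable_const _)).pos_part).aestronglyMeasurable)
    iF ?_ ?_
  · simpa using h
  · intro k
    refine Eventually.of_forall fun x => ?_
    show ‖max (|f x| - (k:ℝ)) 0‖ ≤ |f x|
    rw [Real.norm_eq_abs, abs_of_nonneg (le_max_right _ _)]
    have : (0:ℝ) ≤ k := Nat.cast_nonneg k
    rcases max_cases (|f x| - (k:ℝ)) 0 with ⟨h1, h2⟩ | ⟨h1, h2⟩ <;> rw [h1] <;>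
      [linarith; positivity]
  · refine Eventually.of_forall fun x => ?_
    refine tendsto_atTop_of_eventually_const (i₀ := ⌈|f x|⌉₊) fun k hk => ?_
    have : |f x| ≤ (k:ℝ) := (Nat.le_ceil _).trans (Nat.cast_le.2 hk)
    exact max_eq_right (by linarith)

lemma tendsto_abs_of (f one : XX) (hone_ae : ⇑one =ᵐ[μᵤ] fun _ => (1:ℝ))
    (T : ℕ → XX ≃ₗᵢ[ℝ] XX)
    (hTf : Tendsto (fun n => T n f) atTop (nhds f))
    (hT1 : Tendsto (fun n => T n one) atTop (nhds one)) :
    Tendsto (fun n => T n |f|) atTop (nhds |f|) := by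
  rw [Metric.tendsto_atTop]
  intro ε hε
  obtain ⟨k, hki, hk1⟩ :=
    (((tendsto_trunc f).eventually (gt_mem_nhds (show (0:ℝ) < ε/8 by positivity))).and
      (eventually_ge_atTop 1)).exists
  set lam : ℝ := (k:ℝ) with hlamdef
  have hlam : 0 < lam := by
    have : 0 < k := hk1
    rw [hlamdef]; exact_mod_cast this
  rw [Metric.tendsto_atTop] at hTf hT1
  obtain ⟨N₁, hN₁⟩ := hTf (ε/8) (by positivity)
  obtain ⟨N₂, hN₂⟩ := hT1 (ε/(4*lam)) (by positivity)
  refine ⟨max N₁ N₂, fun n hn => ?_⟩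
  have hb := key f one hone_ae (T n) lam hlam
  have d1 : ‖T n f - f‖ < ε/8 := by
    rw [← dist_eq_norm]; exact hN₁ n (le_trans (le_max_left _ _) hn)
  have d2 : ‖T n one - one‖ < ε/(4*lam) := by
    rw [← dist_eq_norm]; exact hN₂ n (le_trans (le_max_right _ _) hn)
  have hb1 : lam * ‖T n one - one‖ ≤ lam * (ε/(4*lam)) :=
    mul_le_mul_of_nonneg_left d2.le hlam.le
  have hb2 : lam * (ε/(4*lam)) = ε/4 := by
    field_simp
  rw [dist_eq_norm]
  calc ‖T n |f| - |f|‖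
      ≤ lam * ‖T n one - one‖ + 2 * (∫ x, max (|f x| - lam) 0 ∂μᵤ) + 3 * ‖T n f - f‖ := hb
    _ < ε/4 + 2 * (ε/8) + 3 * (ε/8) := by
        rw [← hb2] at *
        have : (∫ x, max (|f x| - lam) 0 ∂μᵤ) < ε/8 := hki
        nlinarith [norm_nonneg (T n f - f), norm_nonneg (T n one - one)]
    _ < ε := by linarith


end

end AbsEnvAux

open AbsEnvAux

local notation "μᵤ" => (volume : Measure unitInterval)

/-- If `Y` is a closed unital subspace of `L_1[0,1]`, then `|f| ∈ Env(Y)`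
for every `f ∈ Y`; consequently every element of the closed sublattice generated by `Y`
(the intersection of all closed sublattices containing `Y`) belongs to `Env(Y)`. -/
theorem abs_mem_envelope_L1
    (huniv : (volume : Measure unitInterval) Set.univ ≠ ⊤)
    (Y : Submodule ℝ (Lp ℝ 1 (volume : Measure unitInterval)))
    (hYc : IsClosed (Y : Set (Lp ℝ 1 (volume : Measure unitInterval))))
    (hone : indicatorConstLp 1 MeasurableSet.univ huniv (1:ℝ) ∈ Y) :
    (∀ f ∈ Y, MemEnvSeq (Y : Set (Lp ℝ 1 (volume : Measure unitInterval))) |f|) ∧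
    (∀ g : Lp ℝ 1 (volume : Measure unitInterval),
      (∀ W : Submodule ℝ (Lp ℝ 1 (volume : Measure unitInterval)),
        IsClosed (W : Set (Lp ℝ 1 (volume : Measure unitInterval))) →
        (∀ a ∈ W, ∀ b ∈ W, a ⊔ b ∈ W) → (∀ a ∈ W, ∀ b ∈ W, a ⊓ b ∈ W) →
        Y ≤ W → g ∈ W) →
      MemEnvSeq (Y : Set (Lp ℝ 1 (volume : Measure unitInterval))) g) := by
  set oneL : XX := indicatorConstLp 1 MeasurableSet.univ huniv (1:ℝ) with honeL
  have hone_ae : ⇑oneL =ᵐ[μᵤ] fun _ => (1:ℝ) := by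
    filter_upwards [indicatorConstLp_coeFn
      (p := 1) (hs := MeasurableSet.univ) (hμs := huniv) (c := (1:ℝ))] with x hx
    rw [hx]; simp
  -- abs stability
  have habs_stab : ∀ a : XX, MemEnvSeq (Y : Set XX) a → MemEnvSeq (Y : Set XX) |a| := by
    intro a ha T hT
    exact tendsto_abs_of a oneL hone_ae T (ha T hT) (hT oneL hone)
  constructor
  · intro f hf T hT
    exact tendsto_abs_of f oneL hone_ae T (hT f hf) (hT oneL hone)
  · intro g hg
    let E : Submodule ℝ XX :=
      { carrier := {u : XX | MemEnvSeq (Y : Set XX) u}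
        add_mem' := by
          intro a b ha hb T hT
          have h1 := ha T hT
          have h2 := hb T hT
          have h3 : ∀ n : ℕ, T n (a + b) = T n a + T n b := fun n => map_add _ _ _
          simp only [h3]
          exact h1.add h2
        zero_mem' := by
          intro T hT
          have h0 : ∀ n : ℕ, T n (0:XX) = 0 := fun n => map_zero _
          simp only [h0]
          exact tendsto_const_nhds
        smul_mem' := by
          intro c a ha T hT
          have h1 := (ha T hT).const_smul c
          have h3 : ∀ n : ℕ, T n (c • a) = c • T n a := fun n => _root_.map_smul _ _ _
          simp only [h3]
          exact h1 }
    have hmemE : ∀ u : XX, u ∈ E ↔ MemEnvSeq (Y : Set XX) u := fun u => Iff.rfl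
    have hEc : IsClosed (E : Set XX) := by
      refine isClosed_of_closure_subset fun u hu => ?_
      intro T hT
      rw [Metric.tendsto_atTop]
      intro ε hε
      obtain ⟨u', hu'E, hd⟩ := Metric.mem_closure_iff.1 hu (ε/3) (by positivity)
      have h2 := (hu'E : MemEnvSeq (Y : Set XX) u') T hT
      rw [Metric.tendsto_atTop] at h2
      obtain ⟨N, hN⟩ := h2 (ε/3) (by positivity)
      refine ⟨N, fun n hn => ?_⟩
      have h1 : dist ((T n) u) ((T n) u') = dist u u' := by
        rw [dist_eq_norm, dist_eq_norm, ← map_sub, (T n).norm_map]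
      calc dist ((T n) u) u
          ≤ dist ((T n) u) ((T n) u') + dist ((T n) u') u' + dist u' u :=
            dist_triangle4 _ _ _ _
        _ < ε/3 + ε/3 + ε/3 := by
            rw [h1, dist_comm u' u]
            exact add_lt_add (add_lt_add hd (hN n hn)) hd
        _ = ε := by ring
    have hEabs : ∀ a ∈ E, |a| ∈ E := fun a ha => habs_stab a ha
    have hsup : ∀ a ∈ E, ∀ b ∈ E, a ⊔ b ∈ E := by
      intro a ha b hb
      rw [sup_eq_half_smul_add_add_abs_sub' ℝ a b]
      exact E.smul_mem _ (E.add_mem (E.add_mem ha hb) (hEabs _ (E.sub_mem hb ha)))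
    have hinf : ∀ a ∈ E, ∀ b ∈ E, a ⊓ b ∈ E := by
      intro a ha b hb
      rw [inf_eq_half_smul_add_sub_abs_sub' ℝ a b]
      exact E.smul_mem _ (E.sub_mem (E.add_mem ha hb) (hEabs _ (E.sub_mem hb ha)))
    have hYE : Y ≤ E := fun y hy T hT => hT y hy
    exact hg E hEc hsup hinf hYE
end

section
/- Let X be an approximately ultrahomogeneous Banach space that is 1-complemented in its bidual. Then every linear isometric embedding t : Y → X of a closed subspace Y ⊆ X extends to a linear contraction T : X → X (with T|_Y = t). -/
open Topology Filter


/-- `X` is approximately ultrahomogeneous (AuH): every linear isometric embedding of a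
finite-dimensional subspace into `X` is approximable in operator norm by surjective
linear isometries of `X`. -/
def IsAuH (X : Type*) [NormedAddCommGroup X] [NormedSpace ℝ X] : Prop :=
  ∀ F : Submodule ℝ X, FiniteDimensional ℝ F →
    ∀ t : F →ₗᵢ[ℝ] X, ∀ ε > (0:ℝ), ∃ T : X ≃ₗᵢ[ℝ] X,
      ∀ y : F, ‖T (y : X) - t y‖ ≤ ε * ‖(y : X)‖

/-- If `X` is approximately ultrahomogeneous and 1-complemented in its
bidual, then every linear isometric embedding `t : Y → X` of a closed subspace `Y ⊆ X`
extends to a linear contraction `T : X → X`. -/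
theorem isometric_embedding_extends_to_contraction
    {X : Type*} [NormedAddCommGroup X] [NormedSpace ℝ X] [CompleteSpace X]
    (hAuH : IsAuH X)
    (P : StrongDual ℝ (StrongDual ℝ X) →L[ℝ] X)
    (hPnorm : @Norm.norm _ (ContinuousLinearMap.hasOpNorm (E := StrongDual ℝ (StrongDual ℝ X))
      (F := X) (σ₁₂ := RingHom.id ℝ)) P ≤ 1)
    (hPid : ∀ x : X, P (NormedSpace.inclusionInDoubleDual ℝ X x) = x)
    (Y : Submodule ℝ X) (hYc : IsClosed (Y : Set X))
    (t : Y →ₗᵢ[ℝ] X) :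
    ∃ T : X →L[ℝ] X, ‖T‖ ≤ 1 ∧ ∀ y : Y, T (y : X) = t y := by
  classical
  -- the index type: finite-dimensional subspaces of `Y` together with `n` (for `ε = 1/(n+1)`)
  letI J := {F : Submodule ℝ X // F ≤ Y ∧ FiniteDimensional ℝ F}
  letI : SemilatticeSup J :=
    Subtype.semilatticeSup (by
      rintro F G ⟨hF1, hF2⟩ ⟨hG1, hG2⟩
      exact ⟨sup_le hF1 hG1, Submodule.finiteDimensional_sup F G⟩)
  haveI : Nonempty J := ⟨⟨⊥, bot_le, inferInstance⟩⟩
  letI I := J × ℕ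
  -- the candidate approximate isometries
  let hemb : ∀ i : I, ((i.1.1 : Submodule ℝ X) →ₗᵢ[ℝ] X) := fun i =>
    t.comp ⟨Submodule.inclusion i.1.2.1, fun x => rfl⟩
  have hε : ∀ i : I, (0:ℝ) < 1 / (i.2 + 1) := fun i => by positivity
  have hex : ∀ i : I, ∃ T : X ≃ₗᵢ[ℝ] X,
      ∀ y : i.1.1, ‖T (y : X) - hemb i y‖ ≤ (1 / (i.2 + 1)) * ‖(y : X)‖ := fun i =>
    hAuH i.1.1 i.1.2.2 (hemb i) _ (hε i)
  choose S hS using hex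
  -- an ultrafilter refining `atTop`
  haveI : (Filter.atTop : Filter I).NeBot := Filter.atTop_neBot
  let U : Ultrafilter I := Ultrafilter.of Filter.atTop
  have hU : (U : Filter I) ≤ Filter.atTop := Ultrafilter.of_le _
  -- the pointwise limits exist
  have hlim : ∀ (x : X) (f : StrongDual ℝ X),
      ∃ c : ℝ, Filter.Tendsto (fun i => f (S i x)) (U : Filter I) (𝓝 c) := by
    intro x f
    have hmem : ∀ i : I, f (S i x) ∈ Set.Icc (-(‖f‖ * ‖x‖)) (‖f‖ * ‖x‖) := by
      intro i
      rw [Set.mem_Icc, ← abs_le, abs_le]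
      constructor <;>
        [have := neg_le_of_abs_le (f.le_opNorm (S i x));
         have := le_of_abs_le (f.le_opNorm (S i x))] <;>
        simpa [Real.norm_eq_abs, (S i).norm_map] using this
    have hle : (U.map fun i => f (S i x) : Filter ℝ) ≤
        Filter.principal (Set.Icc (-(‖f‖ * ‖x‖)) (‖f‖ * ‖x‖)) := by
      rw [Ultrafilter.coe_map, Filter.le_principal_iff, Filter.mem_map]
      exact Filter.univ_mem' hmem
    obtain ⟨c, -, hc⟩ := isCompact_Icc.ultrafilter_le_nhds _ hle
    exact ⟨c, by rwa [Ultrafilter.coe_map] at hc⟩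
  set L : X → StrongDual ℝ X → ℝ :=
    fun x f => limUnder (U : Filter I) (fun i => f (S i x)) with hL
  have hLT : ∀ (x : X) (f : StrongDual ℝ X),
      Filter.Tendsto (fun i => f (S i x)) (U : Filter I) (𝓝 (L x f)) := fun x f =>
    tendsto_nhds_limUnder (hlim x f)
  have hLbound : ∀ (x : X) (f : StrongDual ℝ X), ‖L x f‖ ≤ ‖x‖ * ‖f‖ := by
    intro x f
    rw [Real.norm_eq_abs]
    refine le_of_tendsto (hLT x f).abs (Filter.Eventually.of_forall fun i => ?_)
    calc |f (S i x)| ≤ ‖f‖ * ‖S i x‖ := f.le_opNorm _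
    _ = ‖x‖ * ‖f‖ := by rw [(S i).norm_map, mul_comm]
  -- `L x` as a continuous linear functional on the dual
  let Lx : X → StrongDual ℝ (StrongDual ℝ X) := fun x =>
    LinearMap.mkContinuous
      { toFun := L x
        map_add' := fun f g => by
          refine ((hLT x f).add (hLT x g)).limUnder_eq
        map_smul' := fun c f => by
          refine ((hLT x f).const_smul c).limUnder_eq }
      ‖x‖ (hLbound x)
  have hLx : ∀ (x : X) (f : StrongDual ℝ X), Lx x f = L x f := fun _ _ => rfl
  -- assemble into a continuous linear map `X → X**`
  let Λ : X →L[ℝ] StrongDual ℝ (StrongDual ℝ X) :=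
    LinearMap.mkContinuous
      { toFun := Lx
        map_add' := fun x y => by
          ext f
          simp only [ContinuousLinearMap.add_apply, hLx]
          have : Filter.Tendsto (fun i => f (S i (x + y))) (U : Filter I)
              (𝓝 (L x f + L y f)) := by
            have := (hLT x f).add (hLT y f)
            simpa [map_add] using this
          exact this.limUnder_eq
        map_smul' := fun c x => by
          ext f
          simp only [RingHom.id_apply, ContinuousLinearMap.coe_smul',
            Pi.smul_apply, hLx, smul_eq_mul]
          have : Filter.Tendsto (fun i => f (S i (c • x))) (U : Filter I)
              (𝓝 (c * L x f)) := by
            have := (hLT x f).const_mul c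
            simpa [map_smul, smul_eq_mul] using this
          exact this.limUnder_eq }
      1 (fun x => by
        simpa using LinearMap.mkContinuous_norm_le _ (norm_nonneg x) (hLbound x))
  refine ⟨P.comp Λ, ?_, ?_⟩
  · refine ContinuousLinearMap.opNorm_le_bound _ zero_le_one (fun x => ?_)
    have hΛx : ‖Λ x‖ ≤ ‖x‖ := LinearMap.mkContinuous_norm_le _ (norm_nonneg x) (hLbound x)
    have hPx := ContinuousLinearMap.le_opNorm (E := StrongDual ℝ (StrongDual ℝ X))
      (F := X) (σ₁₂ := RingHom.id ℝ) P (Λ x)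
    show ‖P (Λ x)‖ ≤ 1 * ‖x‖
    nlinarith [norm_nonneg (Λ x), norm_nonneg x]
  · intro y
    have htend : Filter.Tendsto (fun i : I => S i (y : X)) Filter.atTop (𝓝 (t y)) := by
      rw [Metric.tendsto_atTop]
      intro δ hδ
      obtain ⟨n, hn⟩ := exists_nat_one_div_lt (div_pos hδ
        (lt_of_lt_of_le zero_lt_one (le_add_of_nonneg_left (norm_nonneg (y : X)))))
      have hspan : Submodule.span ℝ {(y : X)} ≤ Y := by
        rw [Submodule.span_le, Set.singleton_subset_iff]; exact y.2
      haveI : FiniteDimensional ℝ (Submodule.span ℝ {(y : X)}) :=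
        inferInstance
      refine ⟨(⟨Submodule.span ℝ {(y : X)}, hspan, inferInstance⟩, n), fun i hi => ?_⟩
      have hmem : (y : X) ∈ i.1.1 := by
        have h1 : Submodule.span ℝ {(y : X)} ≤ i.1.1 := hi.1
        exact h1 (Submodule.mem_span_singleton_self _)
      have hspec := hS i ⟨(y : X), hmem⟩
      have hembeq : hemb i ⟨(y : X), hmem⟩ = t y := by
        show t (Submodule.inclusion i.1.2.1 ⟨(y : X), hmem⟩) = t y
        congr 1
      rw [hembeq] at hspec
      rw [dist_eq_norm]
      refine lt_of_le_of_lt hspec ?_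
      have h2 : (1 : ℝ) / (i.2 + 1) ≤ 1 / (n + 1) := by
        apply one_div_le_one_div_of_le (by positivity)
        have : (n : ℝ) ≤ i.2 := Nat.cast_le.2 hi.2
        linarith
      calc (1 : ℝ) / (i.2 + 1) * ‖(y : X)‖ ≤ 1 / (n + 1) * (‖(y : X)‖ + 1) := by
            refine mul_le_mul h2 (by linarith [norm_nonneg (y : X)]) (norm_nonneg _)
              (by positivity)
      _ < δ / (‖(y : X)‖ + 1) * (‖(y : X)‖ + 1) := by
            have hpos : (0:ℝ) < ‖(y : X)‖ + 1 := by positivity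
            exact mul_lt_mul_of_pos_right hn hpos
      _ = δ := by field_simp
    have hΛ : Λ (y : X) = NormedSpace.inclusionInDoubleDual ℝ X (t y) := by
      ext f
      have : Filter.Tendsto (fun i : I => f (S i (y : X))) (U : Filter I) (𝓝 (f (t y))) :=
        (f.continuous.tendsto (t y)).comp (htend.mono_left hU)
      exact this.limUnder_eq
    show P (Λ (y : X)) = t y
    rw [hΛ, hPid]
end

section
/- Let X be an approximately ultrahomogeneous Banach space, C ≥ 1, and let Y be a finite-dimensional subspace of X that is the range of a projection of norm at most C. Then every subspace of X isometric to Y is also the range of a projection of norm at most C. -/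
open Filter Topology

/-- Step 1: for every `δ > 0` there is a "retraction" `R : X →L Z` fixing `Z`
with norm at most `C + δ`. -/
lemma aux_step1 {X : Type*} [NormedAddCommGroup X] [NormedSpace ℝ X]
    (hAuH : IsAuH X) (C : ℝ) (hC : 1 ≤ C)
    (Y : Submodule ℝ X) (hfin : FiniteDimensional ℝ Y)
    (P : X →L[ℝ] X) (hPP : P.comp P = P) (hPnorm : ‖P‖ ≤ C)
    (hPrange : LinearMap.range (P : X →ₗ[ℝ] X) = Y)
    (Z : Submodule ℝ X) (e : Y ≃ₗᵢ[ℝ] Z)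
    (δ : ℝ) (hδ : 0 < δ) :
    ∃ R : X →L[ℝ] Z, (∀ z : Z, R (z : X) = z) ∧ ∀ x, ‖R x‖ ≤ (C + δ) * ‖x‖ := by
  haveI : FiniteDimensional ℝ Z := e.toLinearEquiv.finiteDimensional
  have hC0 : (0:ℝ) < C := lt_of_lt_of_le one_pos hC
  have hCδ : (0:ℝ) < C + δ := by linarith
  set ε : ℝ := δ / (C * (C + δ)) with hεdef
  have hεpos : 0 < ε := div_pos hδ (mul_pos hC0 hCδ)
  have hCε : C * ε = δ / (C + δ) := by
    rw [hεdef]; field_simp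
  have hCε1 : C * ε < 1 := by
    rw [hCε, div_lt_one hCδ]; linarith
  have h1Cε : 0 < 1 - C * ε := by linarith
  -- the isometric embedding of Y into X through Z
  let t : Y →ₗᵢ[ℝ] X := Z.subtypeₗᵢ.comp e.toLinearIsometry
  obtain ⟨T, hT⟩ := hAuH Y hfin t ε hεpos
  have hmem : ∀ x, P x ∈ Y := fun x => hPrange ▸ LinearMap.mem_range_self P.toLinearMap x
  let Pc : X →L[ℝ] Y := P.codRestrict Y hmem
  let R₀ : X →L[ℝ] Z :=
    (e.toLinearIsometry.toContinuousLinearMap).comp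
      (Pc.comp (T.symm.toLinearIsometry.toContinuousLinearMap))
  have hR₀apply : ∀ x, R₀ x = e (Pc (T.symm x)) := fun x => rfl
  have hPcapply : ∀ x, (Pc x : X) = P x := fun x => rfl
  have hPy : ∀ y : Y, P (y : X) = (y : X) := by
    intro y
    obtain ⟨x, hx⟩ : (y : X) ∈ LinearMap.range (P : X →ₗ[ℝ] X) := by rw [hPrange]; exact y.2
    calc P (y : X) = P (P x) := by rw [show P x = (y : X) from hx]
    _ = (P.comp P) x := rfl
    _ = P x := by rw [hPP]
    _ = (y : X) := hx
  have hR₀norm : ∀ x, ‖R₀ x‖ ≤ C * ‖x‖ := by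
    intro x
    have h1 : ‖R₀ x‖ = ‖P (T.symm x)‖ := by
      rw [hR₀apply, e.norm_map]
      rfl
    rw [h1]
    calc ‖P (T.symm x)‖ ≤ ‖P‖ * ‖T.symm x‖ := P.le_opNorm _
    _ ≤ C * ‖x‖ := by
        rw [T.symm.norm_map]
        exact mul_le_mul_of_nonneg_right hPnorm (norm_nonneg _)
  have hR₀close : ∀ z : Z, ‖R₀ (z : X) - z‖ ≤ C * ε * ‖z‖ := by
    intro z
    set y : Y := e.symm z with hy
    have hez : e y = z := e.apply_symm_apply z
    have hyz : ‖(y : X)‖ = ‖z‖ := e.symm.norm_map z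
    have h1 : ‖(z : X) - T (y : X)‖ ≤ ε * ‖z‖ := by
      have ht : t y = (z : X) := by
        show (Z.subtype (e y) : X) = (z : X)
        rw [hez]; rfl
      have := hT y
      rw [ht] at this
      rw [norm_sub_rev]
      calc ‖T (y : X) - (z : X)‖ ≤ ε * ‖(y : X)‖ := this
      _ = ε * ‖z‖ := by rw [hyz]
    have h2 : ‖T.symm (z : X) - (y : X)‖ ≤ ε * ‖z‖ := by
      have heq : T.symm (z : X) - (y : X) = T.symm ((z : X) - T (y : X)) := by
        rw [map_sub, T.symm_apply_apply]
      rw [heq, T.symm.norm_map]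
      exact h1
    have h3 : Pc (T.symm (z : X)) - y = Pc ((T.symm (z : X)) - (y : X)) := by
      apply Subtype.ext
      push_cast
      rw [hPcapply, hPcapply, map_sub, hPy y]
    have h4 : ‖Pc (T.symm (z : X)) - y‖ ≤ C * (ε * ‖z‖) := by
      rw [h3]
      have : ‖Pc ((T.symm (z : X)) - (y : X))‖ = ‖P ((T.symm (z : X)) - (y : X))‖ := rfl
      rw [this]
      calc ‖P ((T.symm (z : X)) - (y : X))‖ ≤ ‖P‖ * ‖(T.symm (z : X)) - (y : X)‖ :=
        P.le_opNorm _
      _ ≤ C * (ε * ‖z‖) :=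
        mul_le_mul hPnorm h2 (norm_nonneg _) hC0.le
    have h5 : R₀ (z : X) - z = e (Pc (T.symm (z : X)) - y) := by
      rw [hR₀apply, map_sub, hez]
    rw [h5, e.norm_map, mul_assoc]
    exact h4
  let W : Z →L[ℝ] Z := R₀.comp Z.subtypeL
  have hWapply : ∀ z : Z, W z = R₀ (z : X) := fun z => rfl
  have hWlower : ∀ z : Z, (1 - C * ε) * ‖z‖ ≤ ‖W z‖ := by
    intro z
    have h1 : ‖z‖ - ‖W z‖ ≤ ‖z - W z‖ := norm_sub_norm_le _ _
    have h2 : ‖z - W z‖ = ‖R₀ (z : X) - z‖ := by rw [← hWapply, norm_sub_rev]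
    have h3 := hR₀close z
    nlinarith [norm_nonneg (W z)]
  have hWinj : Function.Injective W := by
    intro a b hab
    have h : W (a - b) = 0 := by rw [map_sub, hab, sub_self]
    have h2 := hWlower (a - b)
    rw [h, norm_zero] at h2
    have h3 : ‖a - b‖ ≤ 0 := by nlinarith [norm_nonneg (a - b)]
    have h4 : ‖a - b‖ = 0 := le_antisymm h3 (norm_nonneg _)
    rwa [norm_eq_zero, sub_eq_zero] at h4
  have hWsurj : Function.Surjective W.toLinearMap :=
    LinearMap.injective_iff_surjective.mp hWinj
  let We : Z ≃ₗ[ℝ] Z := LinearEquiv.ofBijective W.toLinearMap ⟨hWinj, hWsurj⟩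
  let Wc : Z ≃L[ℝ] Z := We.toContinuousLinearEquiv
  have hWcapply : ∀ z : Z, Wc z = W z := fun z => rfl
  let Wi : Z →L[ℝ] Z := (Wc.symm : Z →L[ℝ] Z)
  have hWi : ∀ z : Z, Wi (W z) = z := by
    intro z
    show Wc.symm (W z) = z
    rw [← hWcapply]
    exact Wc.symm_apply_apply z
  have hWinorm : ∀ w : Z, ‖Wi w‖ ≤ (1 - C * ε)⁻¹ * ‖w‖ := by
    intro w
    have hw : W (Wi w) = w := by
      show W (Wc.symm w) = w
      rw [← hWcapply]
      exact Wc.apply_symm_apply w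
    have h := hWlower (Wi w)
    rw [hw] at h
    rw [← div_eq_inv_mul, le_div_iff₀ h1Cε]
    linarith [h]
  have hkey : (1 - C * ε)⁻¹ * C = C + δ := by
    rw [hCε]
    have h1 : 1 - δ / (C + δ) = C / (C + δ) := by field_simp; ring
    rw [h1]
    field_simp
  refine ⟨Wi.comp R₀, ?_, ?_⟩
  · intro z
    show Wi (R₀ (z : X)) = z
    rw [← hWapply]
    exact hWi z
  · intro x
    calc ‖Wi (R₀ x)‖ ≤ (1 - C * ε)⁻¹ * ‖R₀ x‖ := hWinorm _
    _ ≤ (1 - C * ε)⁻¹ * (C * ‖x‖) :=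
      mul_le_mul_of_nonneg_left (hR₀norm x) (inv_nonneg.mpr h1Cε.le)
    _ = (C + δ) * ‖x‖ := by rw [← mul_assoc, hkey]

/-- In an approximately ultrahomogeneous space `X`, if a
finite-dimensional subspace `Y` is the range of a projection of norm at most `C`, then
so is every subspace of `X` isometric to `Y`. -/
theorem isometric_copies_equally_complemented
    {X : Type*} [NormedAddCommGroup X] [NormedSpace ℝ X] [CompleteSpace X]
    (hAuH : IsAuH X)
    (C : ℝ) (hC : 1 ≤ C)
    (Y : Submodule ℝ X) (hfin : FiniteDimensional ℝ Y)
    (hY : ∃ P : X →L[ℝ] X, P.comp P = P ∧ ‖P‖ ≤ C ∧ LinearMap.range (P : X →ₗ[ℝ] X) = Y)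
    (Z : Submodule ℝ X) (e : Y ≃ₗᵢ[ℝ] Z) :
    ∃ Q : X →L[ℝ] X, Q.comp Q = Q ∧ ‖Q‖ ≤ C ∧ LinearMap.range (Q : X →ₗ[ℝ] X) = Z := by
  obtain ⟨P, hPP, hPnorm, hPrange⟩ := hY
  have hC0 : (0:ℝ) < C := lt_of_lt_of_le one_pos hC
  haveI : FiniteDimensional ℝ Z := e.toLinearEquiv.finiteDimensional
  have key : ∀ n : ℕ, ∃ R : X →L[ℝ] Z, (∀ z : Z, R (z : X) = z) ∧
      ∀ x, ‖R x‖ ≤ (C + 1/((n:ℝ)+1)) * ‖x‖ := fun n =>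
    aux_step1 hAuH C hC Y hfin P hPP hPnorm hPrange Z e (1/((n:ℝ)+1)) (by positivity)
  choose R hRid hRnorm using key
  let 𝒰 : Ultrafilter ℕ := Ultrafilter.of atTop
  have h𝒰 : (𝒰 : Filter ℕ) ≤ atTop := Ultrafilter.of_le atTop
  have hbound : ∀ x : X, ∀ n, R n x ∈ Metric.closedBall (0:Z) ((C+1) * ‖x‖) := by
    intro x n
    rw [Metric.mem_closedBall, dist_zero_right]
    calc ‖R n x‖ ≤ (C + 1/((n:ℝ)+1)) * ‖x‖ := hRnorm n x
    _ ≤ (C + 1) * ‖x‖ := by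
      apply mul_le_mul_of_nonneg_right _ (norm_nonneg x)
      have h1 : (1:ℝ)/((n:ℝ)+1) ≤ 1 := by
        rw [div_le_one (by positivity)]
        linarith [Nat.cast_nonneg (α := ℝ) n]
      linarith
  have hlim : ∀ x : X, ∃ a : Z, Tendsto (fun n => R n x) (𝒰 : Filter ℕ) (𝓝 a) := by
    intro x
    have hK : IsCompact (Metric.closedBall (0:Z) ((C+1) * ‖x‖)) :=
      isCompact_closedBall _ _
    have hle : (↑(𝒰.map (fun n => R n x)) : Filter Z) ≤ 𝓟 (Metric.closedBall (0:Z) ((C+1) * ‖x‖)) := by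
      rw [le_principal_iff, Ultrafilter.coe_map, mem_map]
      exact Filter.univ_mem' (hbound x)
    obtain ⟨a, _, ha⟩ := hK.ultrafilter_le_nhds (𝒰.map (fun n => R n x)) hle
    rw [Ultrafilter.coe_map] at ha
    exact ⟨a, ha⟩
  choose ℓ hℓ using hlim
  have hadd : ∀ x y : X, ℓ (x + y) = ℓ x + ℓ y := by
    intro x y
    refine tendsto_nhds_unique (hℓ (x + y)) ?_
    have heq : (fun n => R n (x + y)) = fun n => R n x + R n y := by
      funext n; rw [map_add]
    rw [heq]
    exact (hℓ x).add (hℓ y)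
  have hsmul : ∀ (c : ℝ) (x : X), ℓ (c • x) = c • ℓ x := by
    intro c x
    refine tendsto_nhds_unique (hℓ (c • x)) ?_
    have heq : (fun n => R n (c • x)) = fun n => c • R n x := by
      funext n; rw [map_smul]
    rw [heq]
    exact (hℓ x).const_smul c
  have hnorm : ∀ x, ‖ℓ x‖ ≤ C * ‖x‖ := by
    intro x
    have h1 : Tendsto (fun n => ‖R n x‖) (𝒰 : Filter ℕ) (𝓝 ‖ℓ x‖) := (hℓ x).norm
    have h2 : Tendsto (fun n : ℕ => (C + 1/((n:ℝ)+1)) * ‖x‖) (𝒰 : Filter ℕ) (𝓝 (C * ‖x‖)) := by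
      apply Tendsto.mono_left ?_ h𝒰
      have h3 : Tendsto (fun n : ℕ => (1:ℝ)/((n:ℝ)+1)) atTop (𝓝 0) :=
        tendsto_one_div_add_atTop_nhds_zero_nat
      have h4 : Tendsto (fun n : ℕ => (C + 1/((n:ℝ)+1)) * ‖x‖) atTop (𝓝 ((C + 0) * ‖x‖)) :=
        ((tendsto_const_nhds (x := C)).add h3).mul (tendsto_const_nhds (x := ‖x‖))
      simpa using h4
    exact le_of_tendsto_of_tendsto' h1 h2 (fun n => hRnorm n x)
  have hid : ∀ z : Z, ℓ (z : X) = z := by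
    intro z
    refine tendsto_nhds_unique (hℓ (z : X)) ?_
    simp only [hRid]
    exact tendsto_const_nhds
  let L : X →ₗ[ℝ] Z :=
    { toFun := ℓ, map_add' := hadd, map_smul' := hsmul }
  let Rc : X →L[ℝ] Z := LinearMap.mkContinuous L C hnorm
  have hRcapply : ∀ x, Rc x = ℓ x := fun x => rfl
  refine ⟨Z.subtypeL.comp Rc, ?_, ?_, ?_⟩
  · ext x
    show (Rc ((Rc x : X)) : X) = (Rc x : X)
    have : Rc ((Rc x : X)) = Rc x := hid (Rc x)
    rw [this]
  · apply ContinuousLinearMap.opNorm_le_bound _ hC0.le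
    intro x
    show ‖(Rc x : X)‖ ≤ C * ‖x‖
    rw [← Submodule.coe_norm]
    exact hnorm x
  · apply le_antisymm
    · rintro _ ⟨x, rfl⟩
      exact (Rc x).2
    · intro z hz
      refine ⟨z, ?_⟩
      show ((Rc z : Z) : X) = z
      have : Rc z = ⟨z, hz⟩ := hid ⟨z, hz⟩
      rw [this]
end
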